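/- arXiv:2103.06214 — 12 statements merged into one kernel-verified Lean document; each statement's English description precedes it below -/
import Mathlib

section
/- Let Γ be an index set and let W be a real Banach space isomorphic (linearly homeomorphic) to ℓ₁(Γ). Then W has the alternate lifting property (ALP): for all Banach spaces X and Y, every bounded linear surjection ψ : X → W and every bounded linear operator S : Y → W, there exists a bounded linear operator Ŝ : Y → X with S = ψ ∘ Ŝ. -/
/-! `ℓ₁(Γ)` is projective. Given a surjection `ψ : X → V` of Banach spaces and an operator
`A : ℓ₁(Γ) → V`, the open mapping theorem provides preimages `x γ` of the images `A (δ γ)` of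
the unit vectors with uniformly bounded norms; as `‖∑ a γ δ γ‖ = ∑ |a γ|`, the assignment
`δ γ ↦ x γ` extends to a bounded operator `L` with `ψ ∘ L = A`. For `e : W ≅ ℓ₁(Γ)`, taking
`V = ℓ₁(Γ)`, `e ∘ ψ` for `ψ` and `A = id` gives a right inverse `L` of `e ∘ ψ`, and
`L ∘ e ∘ S` lifts `S`. -/

open scoped ENNReal

namespace lp

section Extension

variable {𝕜 Γ V : Type*} [NormedField 𝕜] [NormedAddCommGroup V] [NormedSpace 𝕜 V]

theorem norm_eq_tsum_norm (a : lp (fun _ : Γ => 𝕜) 1) : ‖a‖ = ∑' γ, ‖a γ‖ := by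
  simpa using lp.norm_eq_tsum_rpow (by simp) a

theorem summable_norm (a : lp (fun _ : Γ => 𝕜) 1) : Summable fun γ => ‖a γ‖ := by
  simpa using (lp.memℓp a).summable (by simp)

variable {x : Γ → V} {K : ℝ}

theorem summable_norm_smul_of_norm_le (hx : ∀ γ, ‖x γ‖ ≤ K) (a : lp (fun _ : Γ => 𝕜) 1) :
    Summable fun γ => ‖a γ • x γ‖ :=
  .of_nonneg_of_le (fun _ => norm_nonneg _)
    (fun γ => (norm_smul_le _ _).trans (mul_le_mul_of_nonneg_left (hx γ) (norm_nonneg _)))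
    ((summable_norm a).mul_right K)

theorem norm_tsum_smul_le (hx : ∀ γ, ‖x γ‖ ≤ K) (a : lp (fun _ : Γ => 𝕜) 1) :
    ‖∑' γ, a γ • x γ‖ ≤ K * ‖a‖ :=
  calc ‖∑' γ, a γ • x γ‖ ≤ ∑' γ, ‖a γ • x γ‖ :=
        norm_tsum_le_tsum_norm (summable_norm_smul_of_norm_le hx a)
    _ ≤ ∑' γ, ‖a γ‖ * K :=
        (summable_norm_smul_of_norm_le hx a).tsum_le_tsum
          (fun γ => (norm_smul_le _ _).trans (mul_le_mul_of_nonneg_left (hx γ) (norm_nonneg _)))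
          ((summable_norm a).mul_right K)
    _ = K * ‖a‖ := by rw [tsum_mul_right, norm_eq_tsum_norm, mul_comm]

variable [CompleteSpace V]

theorem summable_smul_of_norm_le (hx : ∀ γ, ‖x γ‖ ≤ K) (a : lp (fun _ : Γ => 𝕜) 1) :
    Summable fun γ => a γ • x γ :=
  (summable_norm_smul_of_norm_le hx a).of_norm

noncomputable def tsumSMulCLM (x : Γ → V) (hx : ∀ γ, ‖x γ‖ ≤ K) :
    lp (fun _ : Γ => 𝕜) 1 →L[𝕜] V :=
  LinearMap.mkContinuous
    { toFun a := ∑' γ, a γ • x γ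
      map_add' a b := by
        simp only [lp.coeFn_add, Pi.add_apply, add_smul]
        exact (summable_smul_of_norm_le hx a).tsum_add (summable_smul_of_norm_le hx b)
      map_smul' c a := by
        simp only [lp.coeFn_smul, Pi.smul_apply, smul_eq_mul, mul_smul, RingHom.id_apply]
        exact (summable_smul_of_norm_le hx a).tsum_const_smul c }
    K (norm_tsum_smul_le hx)

theorem tsumSMulCLM_single [DecidableEq Γ] (hx : ∀ γ, ‖x γ‖ ≤ K) (γ : Γ) :
    tsumSMulCLM (𝕜 := 𝕜) x hx (lp.single 1 γ 1) = x γ := by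
  change ∑' j, lp.single (E := fun _ : Γ => 𝕜) 1 γ 1 j • x j = x γ
  rw [tsum_eq_single γ fun j hj => by simp [hj]]
  simp

end Extension

theorem ext_single_one {𝕜 Γ V : Type*} [NormedField 𝕜] [DecidableEq Γ]
    [NormedAddCommGroup V] [NormedSpace 𝕜 V]
    {p : ℝ≥0∞} [Fact (1 ≤ p)] (hp : p ≠ ⊤) {f g : lp (fun _ : Γ => 𝕜) p →L[𝕜] V}
    (h : ∀ γ, f (lp.single p γ (1 : 𝕜)) = g (lp.single p γ (1 : 𝕜))) : f = g := by
  ext a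
  have hsingle (γ : Γ) : lp.single p γ (a γ) = a γ • lp.single (E := fun _ : Γ => 𝕜) p γ 1 := by
    simpa using lp.single_smul (E := fun _ : Γ => 𝕜) p γ (a γ) (1 : 𝕜)
  have hsum := lp.hasSum_single hp a
  refine (hsum.mapL f).unique ?_
  simpa [hsingle, h] using hsum.mapL g

theorem exists_comp_eq_of_surjective {𝕜 Γ X V : Type*} [NontriviallyNormedField 𝕜]
    [NormedAddCommGroup X] [NormedSpace 𝕜 X] [CompleteSpace X]
    [NormedAddCommGroup V] [NormedSpace 𝕜 V] [CompleteSpace V]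
    {ψ : X →L[𝕜] V} (hψ : Function.Surjective ψ) (A : lp (fun _ : Γ => 𝕜) 1 →L[𝕜] V) :
    ∃ L : lp (fun _ : Γ => 𝕜) 1 →L[𝕜] X, ψ.comp L = A := by
  classical
  obtain ⟨C, hC, hpre⟩ := ψ.exists_preimage_norm_le hψ
  choose x hψx hx using fun γ => hpre (A (lp.single 1 γ (1 : 𝕜)))
  have hxK (γ : Γ) : ‖x γ‖ ≤ C * ‖A‖ :=
    (hx γ).trans <| mul_le_mul_of_nonneg_left
      ((A.le_opNorm _).trans (by simp [lp.norm_single])) hC.le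
  refine ⟨tsumSMulCLM x hxK, ext_single_one ENNReal.one_ne_top fun γ => ?_⟩
  simp [tsumSMulCLM_single, hψx]

end lp

theorem alp_of_isomorphic_to_l1_general
    {W : Type*} [NormedAddCommGroup W] [NormedSpace ℝ W]
    {Γ : Type*} (e : W ≃L[ℝ] lp (fun _ : Γ => ℝ) 1) :
    ∀ (X Y : Type*) [NormedAddCommGroup X] [NormedSpace ℝ X] [CompleteSpace X]
      [NormedAddCommGroup Y] [NormedSpace ℝ Y] [CompleteSpace Y]
      (ψ : X →L[ℝ] W), Function.Surjective ψ → ∀ S : Y →L[ℝ] W,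
      ∃ T : Y →L[ℝ] X, ∀ y, ψ (T y) = S y := by
  intro X Y _ _ _ _ _ _ ψ hψ S
  let e' : W →L[ℝ] lp (fun _ : Γ => ℝ) 1 := e
  obtain ⟨L, hL⟩ := lp.exists_comp_eq_of_surjective (ψ := e'.comp ψ)
    (e.surjective.comp hψ) (.id ℝ _)
  refine ⟨L.comp (e'.comp S), fun y => e.injective ?_⟩
  simpa [e'] using congr($hL (e (S y)))

/-- If a Banach space `W` is isomorphic (linearly homeomorphic) to `ℓ₁(Γ)`,
then `W` has the alternate lifting property (ALP). -/
theorem alp_of_isomorphic_to_l1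
    {W : Type*} [NormedAddCommGroup W] [NormedSpace ℝ W] [CompleteSpace W]
    {Γ : Type*} (e : W ≃L[ℝ] lp (fun _ : Γ => ℝ) 1) :
    ∀ (X Y : Type*) [NormedAddCommGroup X] [NormedSpace ℝ X] [CompleteSpace X]
      [NormedAddCommGroup Y] [NormedSpace ℝ Y] [CompleteSpace Y]
      (ψ : X →L[ℝ] W), Function.Surjective ψ → ∀ S : Y →L[ℝ] W,
      ∃ T : Y →L[ℝ] X, ∀ y, ψ (T y) = S y :=
  alp_of_isomorphic_to_l1_general e
end

section
/- Let X be a real Banach space and J a closed subspace of X. If the pair (X, J) has the quotient lifting property (QLP), then J is proximinal in X: for every x ∈ X there exists j ∈ J with ‖x − j‖ = dist(x, J). -/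
/-!
Lift the operator `t ↦ t • [x]` on the (universe-lifted) real line. A norm-preserving lift
sends `1` to a representative `y` of `[x]` with `‖y‖ ≤ ‖[x]‖ = dist(x, J)`, so `x - y` is a
nearest point of `J` to `x`.
-/

universe u

open Metric

lemma Submodule.exists_norm_sub_eq_infDist_of_norm_le {R X : Type*} [Ring R]
    [SeminormedAddCommGroup X] [Module R X] (J : Submodule R X) {x y : X}
    (hyx : J.mkQ y = J.mkQ x) (hy : ‖y‖ ≤ ‖J.mkQ x‖) :
    ∃ j ∈ J, ‖x - j‖ = infDist x (J : Set X) := by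
  have hmem : x - y ∈ J := by
    rw [← Submodule.Quotient.mk_eq_zero, Submodule.Quotient.mk_sub]
    exact sub_eq_zero.mpr hyx.symm
  refine ⟨x - y, hmem, le_antisymm ?_ ?_⟩
  · rw [sub_sub_cancel]
    exact hy.trans_eq (QuotientAddGroup.norm_mk x)
  · simpa [dist_eq_norm] using infDist_le_dist_of_mem (x := x) hmem

lemma ContinuousLinearMap.exists_ulift_apply_one_eq_and_norm_eq {E : Type*}
    [SeminormedAddCommGroup E] [NormedSpace ℝ E] (v : E) :
    ∃ S : ULift.{u} ℝ →L[ℝ] E, S (ULift.up 1) = v ∧ ‖S‖ = ‖v‖ :=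
  ⟨(toSpanSingleton ℝ v).comp
      (ContinuousLinearEquiv.ulift : ULift.{u} ℝ ≃L[ℝ] ℝ).toContinuousLinearMap,
    one_smul ℝ v,
    homothety_norm _ fun t ↦ by simp [norm_smul, mul_comm, ContinuousLinearEquiv.ulift]⟩

lemma ContinuousLinearMap.norm_apply_ulift_one_le {E : Type*} [SeminormedAddCommGroup E]
    [NormedSpace ℝ E] (T : ULift.{u} ℝ →L[ℝ] E) : ‖T (ULift.up 1)‖ ≤ ‖T‖ := by
  simpa using T.le_opNorm (ULift.up 1)

theorem qlp_implies_proximinal_general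
    {X : Type*} [NormedAddCommGroup X] [NormedSpace ℝ X]
    (J : Submodule ℝ X)
    (hQLP : ∀ (Y : Type*) [NormedAddCommGroup Y] [NormedSpace ℝ Y] [CompleteSpace Y]
      (S : Y →L[ℝ] X ⧸ J), ∃ T : Y →L[ℝ] X, (∀ y, J.mkQ (T y) = S y) ∧ ‖T‖ = ‖S‖) :
    ∀ x : X, ∃ j ∈ J, ‖x - j‖ = Metric.infDist x (J : Set X) := by
  intro x
  obtain ⟨S, hS_one, hS_norm⟩ :=
    ContinuousLinearMap.exists_ulift_apply_one_eq_and_norm_eq (J.mkQ x)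
  obtain ⟨T, hT_lift, hT_norm⟩ := hQLP (ULift ℝ) S
  refine J.exists_norm_sub_eq_infDist_of_norm_le (y := T (ULift.up 1))
    (by rw [hT_lift, hS_one]) ?_
  calc ‖T (ULift.up 1)‖ ≤ ‖T‖ := T.norm_apply_ulift_one_le
    _ = ‖J.mkQ x‖ := by rw [hT_norm, hS_norm]

/-- If the pair `(X, J)` has the quotient lifting property (QLP),
then `J` is proximinal in `X`. -/
theorem qlp_implies_proximinal
    {X : Type*} [NormedAddCommGroup X] [NormedSpace ℝ X] [CompleteSpace X]
    (J : Submodule ℝ X) (hJ : IsClosed (J : Set X))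
    (hQLP : ∀ (Y : Type*) [NormedAddCommGroup Y] [NormedSpace ℝ Y] [CompleteSpace Y]
      (S : Y →L[ℝ] X ⧸ J), ∃ T : Y →L[ℝ] X, (∀ y, J.mkQ (T y) = S y) ∧ ‖T‖ = ‖S‖) :
    ∀ x : X, ∃ j ∈ J, ‖x - j‖ = Metric.infDist x (J : Set X) :=
  qlp_implies_proximinal_general J hQLP
end

section
/- Let X be a real Banach space and J a closed subspace of X. If the metric projection onto J admits a linear selection, i.e., there exists a linear map p : X → X with p(x) ∈ J and ‖x − p(x)‖ = dist(x, J) for all x ∈ X, then the pair (X, J) has the quotient lifting property (QLP). -/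
/-- If the metric projection onto a closed subspace `J` of a Banach space `X`
admits a linear selection, then the pair `(X, J)` has the quotient lifting property (QLP). -/
theorem qlp_of_linear_selection
    {X : Type*} [NormedAddCommGroup X] [NormedSpace ℝ X] [CompleteSpace X]
    (J : Submodule ℝ X) (hJ : IsClosed (J : Set X))
    (p : X →ₗ[ℝ] X) (hpJ : ∀ x, p x ∈ J)
    (hpdist : ∀ x, ‖x - p x‖ = Metric.infDist x (J : Set X)) :
    ∀ (Y : Type*) [NormedAddCommGroup Y] [NormedSpace ℝ Y] [CompleteSpace Y]
      (S : Y →L[ℝ] X ⧸ J), ∃ T : Y →L[ℝ] X, (∀ y, J.mkQ (T y) = S y) ∧ ‖T‖ = ‖S‖ := by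
  intro Y _ _ _ S
  -- the norm of a coset equals the infDist of a representative
  have hnorm : ∀ x : X, ‖(Submodule.Quotient.mk x : X ⧸ J)‖ = Metric.infDist x (J : Set X) := by
    intro x
    exact QuotientAddGroup.norm_mk (S := J.toAddSubgroup) x
  -- p fixes J
  have hfix : ∀ j ∈ J, p j = j := by
    intro j hj
    have h0 : Metric.infDist j (J : Set X) = 0 := by
      rw [← Metric.mem_closure_iff_infDist_zero ⟨0, J.zero_mem⟩]
      exact subset_closure hj
    have := hpdist j
    rw [h0, norm_eq_zero, sub_eq_zero] at this
    exact this.symm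
  -- the linear map x ↦ x - p x vanishes on J, so it factors through the quotient
  have hker : J ≤ LinearMap.ker (LinearMap.id - p) := by
    intro j hj
    simp [LinearMap.mem_ker, hfix j hj, sub_eq_zero]
  set q : (X ⧸ J) →ₗ[ℝ] X := J.liftQ (LinearMap.id - p) hker with hq
  have hqmk : ∀ x : X, q (Submodule.Quotient.mk x) = x - p x := fun x => rfl
  have hqnorm : ∀ z : X ⧸ J, ‖q z‖ = ‖z‖ := by
    intro z
    obtain ⟨x, rfl⟩ := Submodule.Quotient.mk_surjective J z
    rw [hqmk, hpdist, hnorm]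
  -- package q as a continuous linear map
  set qc : (X ⧸ J) →L[ℝ] X := q.mkContinuous 1 (fun z => by rw [hqnorm, one_mul]) with hqc
  refine ⟨qc.comp S, ?_, ?_⟩
  · intro y
    obtain ⟨x, hx⟩ := Submodule.Quotient.mk_surjective J (S y)
    have : qc (S y) = x - p x := by rw [← hx]; exact hqmk x
    rw [ContinuousLinearMap.comp_apply, this, map_sub, ← hx]
    have hpx : J.mkQ (p x) = 0 := (Submodule.Quotient.mk_eq_zero J).mpr (hpJ x)
    simp [hpx, Submodule.mkQ_apply]
  · apply le_antisymm
    · refine ContinuousLinearMap.opNorm_le_bound _ (norm_nonneg S) fun y => ?_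
      rw [ContinuousLinearMap.comp_apply]
      calc ‖qc (S y)‖ = ‖S y‖ := hqnorm _
        _ ≤ ‖S‖ * ‖y‖ := S.le_opNorm y
    · refine ContinuousLinearMap.opNorm_le_bound _ (norm_nonneg _) fun y => ?_
      calc ‖S y‖ = ‖qc (S y)‖ := (hqnorm _).symm
        _ = ‖(qc.comp S) y‖ := rfl
        _ ≤ ‖qc.comp S‖ * ‖y‖ := (qc.comp S).le_opNorm y
end

section
/- Let X be a real Banach space and J a closed subspace which is an M-summand of X, i.e., there is a bounded linear projection P : X → X with range J such that ‖x‖ = max(‖P x‖, ‖x − P x‖) for all x ∈ X. Then the pair (X, J) has the quotient lifting property (QLP). -/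
/-!
The complementary projection `Q = 1 - P` kills `J` and agrees with the identity modulo `J`, so
it factors through `X ⧸ J` as a linear section `L` of the quotient map. The M-summand condition
makes `Q` contractive, which forces `‖Q x‖` to be the distance from `x` to `J`; hence `L` is an
isometry, and `T = L ∘ S` lifts `S` without increasing its norm.
-/

namespace Submodule

theorem exists_lift_norm_eq_of_isometric_section {𝕜 X Y : Type*} [NontriviallyNormedField 𝕜]
    [SeminormedAddCommGroup X] [NormedSpace 𝕜 X] [SeminormedAddCommGroup Y] [NormedSpace 𝕜 Y]
    {J : Submodule 𝕜 X} (L : (X ⧸ J) →ₗᵢ[𝕜] X) (hL : ∀ v, J.mkQ (L v) = v)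
    (S : Y →L[𝕜] X ⧸ J) :
    ∃ T : Y →L[𝕜] X, (∀ y, J.mkQ (T y) = S y) ∧ ‖T‖ = ‖S‖ :=
  ⟨L.toContinuousLinearMap.comp S, fun y => hL (S y), L.norm_toContinuousLinearMap_comp⟩

section ContractiveSection

variable {𝕜 X : Type*} [NormedField 𝕜] [SeminormedAddCommGroup X] [NormedSpace 𝕜 X]
  {J : Submodule 𝕜 X}

theorem norm_mkQ_eq_norm_of_contractive (Q : X →ₗ[𝕜] X) (hQJ : J ≤ LinearMap.ker Q)
    (hQ_sub : ∀ x, x - Q x ∈ J) (hQ_le : ∀ x, ‖Q x‖ ≤ ‖x‖) (x : X) :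
    ‖J.mkQ x‖ = ‖Q x‖ := by
  apply le_antisymm
  · have hmk : J.mkQ x = J.mkQ (Q x) := (Quotient.eq J).2 (hQ_sub x)
    rw [hmk]
    exact Quotient.norm_mk_le J (Q x)
  · refine QuotientAddGroup.le_norm_iff.2 fun a ha => ?_
    have hQa : Q a = Q x := by
      have hax : a - x ∈ J := (Quotient.eq J).1 ha
      simpa [sub_eq_zero] using hQJ hax
    exact hQa ▸ hQ_le a

noncomputable def isometricSectionOfContractive (Q : X →ₗ[𝕜] X) (hQJ : J ≤ LinearMap.ker Q)
    (hQ_sub : ∀ x, x - Q x ∈ J) (hQ_le : ∀ x, ‖Q x‖ ≤ ‖x‖) : (X ⧸ J) →ₗᵢ[𝕜] X where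
  toLinearMap := J.liftQ Q hQJ
  norm_map' v := by
    obtain ⟨x, rfl⟩ := J.mkQ_surjective v
    exact (norm_mkQ_eq_norm_of_contractive Q hQJ hQ_sub hQ_le x).symm

theorem mkQ_isometricSectionOfContractive (Q : X →ₗ[𝕜] X) (hQJ : J ≤ LinearMap.ker Q)
    (hQ_sub : ∀ x, x - Q x ∈ J) (hQ_le : ∀ x, ‖Q x‖ ≤ ‖x‖) (v : X ⧸ J) :
    J.mkQ (isometricSectionOfContractive Q hQJ hQ_sub hQ_le v) = v := by
  obtain ⟨x, rfl⟩ := J.mkQ_surjective v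
  exact ((Quotient.eq J).2 (hQ_sub x)).symm

end ContractiveSection

end Submodule

theorem qlp_of_M_summand_general
    {X : Type*} [NormedAddCommGroup X] [NormedSpace ℝ X]
    (J : Submodule ℝ X)
    (P : X →L[ℝ] X) (hproj : ∀ x, P (P x) = P x)
    (hrange : LinearMap.range (P : X →ₗ[ℝ] X) = J)
    (hM : ∀ x, ‖x‖ = max ‖P x‖ ‖x - P x‖) :
    ∀ (Y : Type*) [NormedAddCommGroup Y] [NormedSpace ℝ Y] [CompleteSpace Y]
      (S : Y →L[ℝ] X ⧸ J), ∃ T : Y →L[ℝ] X, (∀ y, J.mkQ (T y) = S y) ∧ ‖T‖ = ‖S‖ := by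
  intro Y _ _ _ S
  let Q : X →ₗ[ℝ] X := LinearMap.id - (P : X →ₗ[ℝ] X)
  have hQ_apply : ∀ x, Q x = x - P x := fun _ => rfl
  have hQJ : J ≤ LinearMap.ker Q := by
    rw [← hrange]
    rintro _ ⟨x, rfl⟩
    simp [hQ_apply, hproj]
  have hQ_sub : ∀ x, x - Q x ∈ J := fun x => by
    simp [hQ_apply, ← hrange]
  have hQ_le : ∀ x, ‖Q x‖ ≤ ‖x‖ := fun x => hQ_apply x ▸ hM x ▸ le_max_right _ _
  exact Submodule.exists_lift_norm_eq_of_isometric_section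
    (Submodule.isometricSectionOfContractive Q hQJ hQ_sub hQ_le)
    (Submodule.mkQ_isometricSectionOfContractive Q hQJ hQ_sub hQ_le) S

/-- If `J` is an M-summand of a Banach space `X`, then the pair `(X, J)`
has the quotient lifting property (QLP). -/
theorem qlp_of_M_summand
    {X : Type*} [NormedAddCommGroup X] [NormedSpace ℝ X] [CompleteSpace X]
    (J : Submodule ℝ X) (hJ : IsClosed (J : Set X))
    (P : X →L[ℝ] X) (hproj : ∀ x, P (P x) = P x)
    (hrange : LinearMap.range (P : X →ₗ[ℝ] X) = J)
    (hM : ∀ x, ‖x‖ = max ‖P x‖ ‖x - P x‖) :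
    ∀ (Y : Type*) [NormedAddCommGroup Y] [NormedSpace ℝ Y] [CompleteSpace Y]
      (S : Y →L[ℝ] X ⧸ J), ∃ T : Y →L[ℝ] X, (∀ y, J.mkQ (T y) = S y) ∧ ‖T‖ = ‖S‖ :=
  qlp_of_M_summand_general J P hproj hrange hM
end

section
/- Let ℓ∞ denote the Banach space of bounded real sequences with the supremum norm and c₀ its closed subspace of sequences converging to 0. Then the pair (ℓ∞, c₀) does not have the quotient lifting property (QLP): there is a Banach space Y and a bounded linear operator S : Y → ℓ∞/c₀ admitting no bounded linear operator T : Y → ℓ∞ with π ∘ T = S and ‖T‖ = ‖S‖ (indeed the identity operator on ℓ∞/c₀ admits no such lift). -/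
open Filter Topology
open scoped ENNReal

set_option synthInstance.maxHeartbeats 1000000
set_option maxHeartbeats 1000000

/-- The subspace `c₀` of `ℓ∞`: bounded real sequences converging to `0`. -/
noncomputable def czero : Submodule ℝ (lp (fun _ : ℕ => ℝ) ∞) where
  carrier := {x | Tendsto (fun n => x n) atTop (𝓝 (0 : ℝ))}
  add_mem' := by
    intro a b ha hb
    have : Tendsto (fun n => a n + b n) atTop (𝓝 (0 + 0 : ℝ)) := ha.add hb
    simpa using this
  zero_mem' := by simpa using (tendsto_const_nhds : Tendsto (fun _ : ℕ => (0:ℝ)) atTop _)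
  smul_mem' := by
    intro c a ha
    have : Tendsto (fun n => c * a n) atTop (𝓝 (c * 0 : ℝ)) := ha.const_mul c
    simpa using this

instance : IsClosed (czero : Set (lp (fun _ : ℕ => ℝ) ∞)) := by
  rw [← isSeqClosed_iff_isClosed]
  intro x y hx hxy
  show Tendsto (fun n => y n) atTop (𝓝 (0 : ℝ))
  rw [Metric.tendsto_atTop] at hxy ⊢
  intro ε hε
  obtain ⟨K, hK⟩ := hxy (ε / 2) (by positivity)
  have hxK : Tendsto (fun n => (x K) n) atTop (𝓝 (0 : ℝ)) := hx K
  rw [Metric.tendsto_atTop] at hxK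
  obtain ⟨N, hN⟩ := hxK (ε / 2) (by positivity)
  refine ⟨N, fun n hn => ?_⟩
  have h2 : dist (x K) y < ε / 2 := hK K le_rfl
  have h3 : dist (x K n) 0 < ε / 2 := hN n hn
  have h4 : dist (y n) (x K n) ≤ dist y (x K) := by
    rw [dist_eq_norm, dist_eq_norm]
    simpa using lp.norm_apply_le_norm ENNReal.top_ne_zero (y - x K) n
  rw [dist_comm (x K) y] at h2
  calc dist (y n) 0 ≤ dist (y n) (x K n) + dist (x K n) 0 := dist_triangle _ _ _
    _ ≤ dist y (x K) + dist (x K n) 0 := by linarith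
    _ < ε / 2 + ε / 2 := by linarith
    _ = ε := by ring


lemma sub_one_div_lt (r : ℝ) (k : ℕ) : r - 1/(k+1) < r := by
  have h : (0:ℝ) < 1/(k+1) := by positivity
  linarith

noncomputable def qseq (r : ℝ) (k : ℕ) : ℚ :=
  (exists_rat_btwn (sub_one_div_lt r k)).choose

lemma qseq_gt (r : ℝ) (k : ℕ) : r - 1/(k+1) < (qseq r k : ℝ) :=
  (exists_rat_btwn (sub_one_div_lt r k)).choose_spec.1

lemma qseq_lt (r : ℝ) (k : ℕ) : (qseq r k : ℝ) < r :=
  (exists_rat_btwn (sub_one_div_lt r k)).choose_spec.2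

-- infinite range
lemma qseq_range_infinite (r : ℝ) : (Set.range (qseq r)).Infinite := by
  by_contra h
  rw [Set.not_infinite] at h
  have hne : (h.toFinset).Nonempty := ⟨qseq r 0, by simp [Set.mem_range]⟩
  set M := h.toFinset.max' hne with hM
  have hMmem : M ∈ Set.range (qseq r) := by
    have := h.toFinset.max'_mem hne
    simpa using this
  obtain ⟨j, hj⟩ := hMmem
  have hMlt : (M : ℝ) < r := by rw [← hj]; exact qseq_lt r j
  obtain ⟨k, hk⟩ := exists_nat_one_div_lt (show (0:ℝ) < r - M by linarith)
  have h1 : (M : ℝ) < (qseq r k : ℝ) := by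
    have := qseq_gt r k
    push_cast at this ⊢
    linarith
  have h2 : qseq r k ≤ M := h.toFinset.le_max' _ (by simp [Set.mem_range])
  exact absurd (by exact_mod_cast h2) (not_le.mpr h1)

/-- The almost disjoint family, transported to `ℕ`. -/
def Aset (r : ℝ) : Set ℕ := Encodable.encode '' (Set.range (qseq r))

lemma Aset_infinite (r : ℝ) : (Aset r).Infinite :=
  (qseq_range_infinite r).image (Encodable.encode_injective.injOn)

lemma Aset_inter_finite {r s : ℝ} (hrs : r < s) : (Aset r ∩ Aset s).Finite := by
  have key : Set.range (qseq r) ∩ Set.range (qseq s) ⊆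
      qseq s '' (Set.Iio (⌈1/(s-r)⌉₊)) := by
    rintro q ⟨⟨j, hj⟩, ⟨k, hk⟩⟩
    refine ⟨k, ?_, hk⟩
    have h1 : (q:ℝ) < r := hj ▸ qseq_lt r j
    have h2 : s - 1/(k+1) < (q:ℝ) := hk ▸ qseq_gt s k
    have hsr : (0:ℝ) < s - r := by linarith
    have hk1 : (0:ℝ) < (k:ℝ)+1 := by positivity
    have h3 : (s - r) * ((k:ℝ)+1) < 1 := by
      have : s - r < 1/((k:ℝ)+1) := by linarith
      calc (s - r) * ((k:ℝ)+1) < (1/((k:ℝ)+1)) * ((k:ℝ)+1) := by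
            exact mul_lt_mul_of_pos_right this hk1
        _ = 1 := by field_simp
    have h4 : (k:ℝ) < 1/(s-r) := by
      rw [lt_div_iff₀ hsr]; nlinarith
    exact Set.mem_Iio.mpr (Nat.lt_ceil.mpr h4)
  have hfin : (Set.range (qseq r) ∩ Set.range (qseq s)).Finite :=
    Set.Finite.subset ((Set.finite_Iio _).image _) key
  have : Aset r ∩ Aset s = Encodable.encode '' (Set.range (qseq r) ∩ Set.range (qseq s)) := by
    rw [Set.image_inter Encodable.encode_injective]; rfl
  rw [this]
  exact hfin.image _

/-- Indicator of a set of naturals as an element of `ℓ∞`. -/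
noncomputable def chi (A : Set ℕ) : lp (fun _ : ℕ => ℝ) ∞ :=
  ⟨A.indicator (fun _ => (1:ℝ)), memℓp_infty ⟨1, by
    rintro x ⟨n, rfl⟩
    by_cases h : n ∈ A <;> simp [Set.indicator_of_mem, Set.indicator_of_notMem, h]⟩⟩

lemma chi_apply (A : Set ℕ) (n : ℕ) : chi A n = A.indicator (fun _ => (1:ℝ)) n := rfl

lemma chi_apply_mem {A : Set ℕ} {n : ℕ} (h : n ∈ A) : chi A n = 1 := by
  rw [chi_apply, Set.indicator_of_mem h]

lemma chi_apply_not_mem {A : Set ℕ} {n : ℕ} (h : n ∉ A) : chi A n = 0 := by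
  rw [chi_apply, Set.indicator_of_notMem h]

lemma chi_norm_le (A : Set ℕ) : ‖chi A‖ ≤ 1 := by
  apply lp.norm_le_of_forall_le (by norm_num)
  intro n
  by_cases h : n ∈ A
  · simp [chi_apply_mem h]
  · simp [chi_apply_not_mem h]

lemma chi_mem_czero_of_finite {A : Set ℕ} (h : A.Finite) : chi A ∈ czero := by
  show Tendsto (fun n => chi A n) atTop (𝓝 (0:ℝ))
  refine tendsto_const_nhds.congr' ?_
  obtain ⟨N, hN⟩ := h.bddAbove
  filter_upwards [eventually_gt_atTop N] with n hn
  exact (chi_apply_not_mem fun hmem => absurd (hN hmem) (not_le.mpr hn)).symm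

lemma chi_add_chi (A B : Set ℕ) : chi A + chi B = chi (A ∪ B) + chi (A ∩ B) := by
  apply lp.ext
  funext n
  have h1 : (chi A + chi B) n = chi A n + chi B n := by
    rw [lp.coeFn_add]; rfl
  have h2 : (chi (A ∪ B) + chi (A ∩ B)) n = chi (A ∪ B) n + chi (A ∩ B) n := by
    rw [lp.coeFn_add]; rfl
  rw [h1, h2]
  by_cases hA : n ∈ A <;> by_cases hB : n ∈ B
  · rw [chi_apply_mem hA, chi_apply_mem hB, chi_apply_mem (Set.mem_union_left _ hA),
      chi_apply_mem (Set.mem_inter hA hB)]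
  · rw [chi_apply_mem hA, chi_apply_not_mem hB, chi_apply_mem (Set.mem_union_left _ hA),
      chi_apply_not_mem (fun h => hB h.2)]
  · rw [chi_apply_not_mem hA, chi_apply_mem hB, chi_apply_mem (Set.mem_union_right _ hB),
      chi_apply_not_mem (fun h => hA h.1)]
    ring
  · rw [chi_apply_not_mem hA, chi_apply_not_mem hB,
      chi_apply_not_mem (fun h => h.elim hA hB), chi_apply_not_mem (fun h => hA h.1)]

lemma quot_norm_le {r s : ℝ} (hrs : r < s) :
    ‖czero.mkQ (chi (Aset r)) + czero.mkQ (chi (Aset s))‖ ≤ 1 := by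
  have h1 : czero.mkQ (chi (Aset r)) + czero.mkQ (chi (Aset s))
      = czero.mkQ (chi (Aset r ∪ Aset s)) + czero.mkQ (chi (Aset r ∩ Aset s)) := by
    rw [← map_add, ← map_add, chi_add_chi]
  have h2 : czero.mkQ (chi (Aset r ∩ Aset s)) = 0 := by
    rw [Submodule.mkQ_apply, Submodule.Quotient.mk_eq_zero]
    exact chi_mem_czero_of_finite (Aset_inter_finite hrs)
  rw [h1, h2, add_zero, Submodule.mkQ_apply]
  exact le_trans (Submodule.Quotient.norm_mk_le _ _) (chi_norm_le _)

/-- The pair `(ℓ∞, c₀)` does not have the quotient lifting property (QLP):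
some bounded operator into `ℓ∞/c₀` admits no norm-preserving lift. -/
theorem l_infty_czero_not_qlp :
    ¬ (∀ (Y : Type) [NormedAddCommGroup Y] [NormedSpace ℝ Y] [CompleteSpace Y]
      (S : Y →L[ℝ] (lp (fun _ : ℕ => ℝ) ∞) ⧸ czero),
      ∃ T : Y →L[ℝ] lp (fun _ : ℕ => ℝ) ∞,
        (∀ y, czero.mkQ (T y) = S y) ∧ ‖T‖ = ‖S‖) := by
  intro H
  obtain ⟨T, hT, hnorm⟩ := H (lp (fun _ : ℕ => ℝ) ∞ ⧸ czero)
    (ContinuousLinearMap.id ℝ _)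
  have hTnorm : ‖T‖ ≤ 1 := le_trans (le_of_eq hnorm) ContinuousLinearMap.norm_id_le
  have hpick : ∀ r : ℝ, ∃ n, n ∈ Aset r ∧ 1/2 < T (czero.mkQ (chi (Aset r))) n := by
    intro r
    set ξ := czero.mkQ (chi (Aset r)) with hξ
    have hmem : T ξ - chi (Aset r) ∈ czero := by
      have h1 : czero.mkQ (T ξ) = ξ := hT ξ
      rw [hξ, Submodule.mkQ_apply, Submodule.mkQ_apply] at h1
      exact (Submodule.Quotient.eq czero).mp h1
    have htend : Tendsto (fun n => (T ξ - chi (Aset r)) n) atTop (𝓝 (0:ℝ)) := hmem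
    rw [Metric.tendsto_atTop] at htend
    obtain ⟨N, hN⟩ := htend (1/2) (by norm_num)
    obtain ⟨n, hnA, hnN⟩ := (Aset_infinite r).exists_gt N
    refine ⟨n, hnA, ?_⟩
    have h3 := hN n hnN.le
    have hval : (T ξ - chi (Aset r)) n = T ξ n - 1 := by
      have h4 : (T ξ - chi (Aset r)) n = T ξ n - chi (Aset r) n := by
        rw [lp.coeFn_sub]; rfl
      rw [h4, chi_apply_mem hnA]
    rw [hval, Real.dist_eq] at h3
    have := (abs_lt.mp h3).1
    linarith
  choose f hf1 hf2 using hpick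
  have main : ∀ r s : ℝ, r < s → f r ≠ f s := by
    intro r s hrs hfe
    have hb : |T (czero.mkQ (chi (Aset r)) + czero.mkQ (chi (Aset s))) (f r)| ≤ 1 := by
      calc |T (czero.mkQ (chi (Aset r)) + czero.mkQ (chi (Aset s))) (f r)|
          = ‖T (czero.mkQ (chi (Aset r)) + czero.mkQ (chi (Aset s))) (f r)‖ :=
            (Real.norm_eq_abs _).symm
        _ ≤ ‖T (czero.mkQ (chi (Aset r)) + czero.mkQ (chi (Aset s)))‖ :=
            lp.norm_apply_le_norm ENNReal.top_ne_zero _ _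
        _ ≤ ‖T‖ * ‖czero.mkQ (chi (Aset r)) + czero.mkQ (chi (Aset s))‖ :=
            T.le_opNorm _
        _ ≤ 1 * 1 := by
            exact mul_le_mul hTnorm (quot_norm_le hrs) (norm_nonneg _) (by norm_num)
        _ = 1 := one_mul 1
    have hc : T (czero.mkQ (chi (Aset r)) + czero.mkQ (chi (Aset s))) (f r)
        = T (czero.mkQ (chi (Aset r))) (f r) + T (czero.mkQ (chi (Aset s))) (f r) := by
      rw [map_add, lp.coeFn_add]; rfl
    have h1 := hf2 r
    have h2 := hf2 s
    rw [← hfe] at h2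
    rw [hc] at hb
    have := (abs_le.mp hb).2
    linarith
  have hinj : Function.Injective f := by
    intro r s h
    by_contra hne
    rcases Ne.lt_or_gt hne with hlt | hlt
    · exact main r s hlt h
    · exact main s r hlt h.symm
  exact (inferInstance : Uncountable ℝ).not_countable hinj.countable
end

section
/- Let X be a real Banach space and J a proximinal closed subspace of X whose metric complement J₀ = {x ∈ X : ‖x‖ = dist(x, J)} is a linear subspace of X. Then the pair (X, J) has the quotient lifting property (QLP). -/
/-- If `J` is a proximinal closed subspace of a Banach space `X` whose metric
complement `J₀ = {x : ‖x‖ = dist(x, J)}` is a linear subspace, then `(X, J)` has the QLP. -/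
theorem qlp_of_metric_complement_subspace
    {X : Type*} [NormedAddCommGroup X] [NormedSpace ℝ X] [CompleteSpace X]
    (J : Submodule ℝ X) (hJ : IsClosed (J : Set X))
    (hprox : ∀ x : X, ∃ j ∈ J, ‖x - j‖ = Metric.infDist x (J : Set X))
    (hJ₀ : ∃ W : Submodule ℝ X,
      (W : Set X) = {x : X | ‖x‖ = Metric.infDist x (J : Set X)}) :
    ∀ (Y : Type*) [NormedAddCommGroup Y] [NormedSpace ℝ Y] [CompleteSpace Y]
      (S : Y →L[ℝ] X ⧸ J), ∃ T : Y →L[ℝ] X, (∀ y, J.mkQ (T y) = S y) ∧ ‖T‖ = ‖S‖ := by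
  obtain ⟨W, hW⟩ := hJ₀
  -- norm of quotient of x equals infDist x J
  have hnorm : ∀ x : X, ‖J.mkQ x‖ = Metric.infDist x (J : Set X) := fun x =>
    QuotientAddGroup.norm_mk (S := J.toAddSubgroup) x
  have hmemW : ∀ x : X, x ∈ W ↔ ‖x‖ = ‖J.mkQ x‖ := by
    intro x
    rw [hnorm]
    constructor
    · intro hx; exact (Set.ext_iff.mp hW x).mp hx
    · intro hx; exact (Set.ext_iff.mp hW x).mpr hx
  -- the map W → X ⧸ J
  set ℓ : W →ₗ[ℝ] X ⧸ J := J.mkQ.comp W.subtype with hℓ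
  have hiso : ∀ w : W, ‖ℓ w‖ = ‖w‖ := fun w => ((hmemW w).mp w.2).symm
  have hinj : Function.Injective ℓ := by
    intro a b hab
    have : ‖ℓ (a - b)‖ = 0 := by rw [map_sub, hab, sub_self, norm_zero]
    rw [hiso] at this
    have := norm_eq_zero.mp this
    exact sub_eq_zero.mp this
  have hsurj : Function.Surjective ℓ := by
    intro q
    obtain ⟨x, rfl⟩ := J.mkQ_surjective q
    obtain ⟨j, hj, hxj⟩ := hprox x
    have hmk : J.mkQ (x - j) = J.mkQ x := by
      simp [map_sub, (Submodule.Quotient.mk_eq_zero J).mpr hj, Submodule.mkQ_apply]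
    have hx : x - j ∈ W := by
      rw [hmemW, hmk, hnorm]
      exact hxj
    exact ⟨⟨x - j, hx⟩, hmk⟩
  let e : W ≃ₗ[ℝ] X ⧸ J := LinearEquiv.ofBijective ℓ ⟨hinj, hsurj⟩
  let ei : W ≃ₗᵢ[ℝ] X ⧸ J := ⟨e, fun w => hiso w⟩
  intro Y _ _ _ S
  refine ⟨W.subtypeL.comp ((ei.symm.toContinuousLinearEquiv : (X ⧸ J) →L[ℝ] W).comp S), ?_, ?_⟩
  · intro y
    have : ℓ (ei.symm (S y)) = S y := ei.apply_symm_apply (S y)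
    simpa [ℓ] using this
  · have hval : ∀ y, ‖(W.subtypeL.comp ((ei.symm.toContinuousLinearEquiv :
        (X ⧸ J) →L[ℝ] W).comp S)) y‖ = ‖S y‖ := by
      intro y
      simp only [ContinuousLinearMap.comp_apply, Submodule.subtypeL_apply]
      rw [show ‖((ei.symm.toContinuousLinearEquiv : (X ⧸ J) →L[ℝ] W) (S y) : X)‖
          = ‖((ei.symm (S y) : W) : X)‖ from rfl]
      calc ‖((ei.symm (S y) : W) : X)‖ = ‖ei.symm (S y)‖ := rfl
        _ = ‖S y‖ := ei.symm.norm_map _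
    apply le_antisymm
    · refine ContinuousLinearMap.opNorm_le_bound _ (norm_nonneg S) fun y => ?_
      rw [hval y]; exact S.le_opNorm y
    · refine ContinuousLinearMap.opNorm_le_bound _ (norm_nonneg _) fun y => ?_
      rw [← hval y]; exact ContinuousLinearMap.le_opNorm _ y
end

section
/- Let X be a real Banach space and J a proximinal closed subspace of X. Then the metric complement J₀ = {x ∈ X : ‖x‖ = dist(x, J)} is a linear subspace of X if and only if J is Chebyshev (every x ∈ X has a unique nearest point in J) and the metric projection P_J : X → J, sending x to its unique nearest point in J, is a linear map. -/
lemma infDist_sub_mem_aux {X : Type*} [NormedAddCommGroup X] [NormedSpace ℝ X]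
    (J : Submodule ℝ X) {j : X} (hj : j ∈ J) (x : X) :
    Metric.infDist (x - j) (J : Set X) ≤ Metric.infDist x (J : Set X) := by
  have hne : (J : Set X).Nonempty := ⟨0, J.zero_mem⟩
  by_contra h
  push_neg at h
  obtain ⟨y, hy, hlt⟩ := (Metric.infDist_lt_iff hne).mp h
  have heq : dist x y = dist (x - j) (y - j) := by
    simp only [dist_eq_norm]
    congr 1
    abel
  have := Metric.infDist_le_dist_of_mem (x := x - j) (J.sub_mem hy hj)
  rw [← heq] at this
  exact absurd (this.trans_lt hlt) (lt_irrefl _)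

lemma infDist_sub_mem {X : Type*} [NormedAddCommGroup X] [NormedSpace ℝ X]
    (J : Submodule ℝ X) {j : X} (hj : j ∈ J) (x : X) :
    Metric.infDist (x - j) (J : Set X) = Metric.infDist x (J : Set X) := by
  refine le_antisymm (infDist_sub_mem_aux J hj x) ?_
  have := infDist_sub_mem_aux J (J.neg_mem hj) (x - j)
  simpa [sub_neg_eq_add, sub_add_cancel] using this

/-- For a proximinal closed subspace `J` of a Banach space `X`, the metric
complement `J₀ = {x : ‖x‖ = dist(x, J)}` is a linear subspace of `X` if and only if `J` is
Chebyshev and the metric projection `P_J` is linear. -/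
theorem metric_complement_subspace_iff_chebyshev_and_linear
    {X : Type*} [NormedAddCommGroup X] [NormedSpace ℝ X] [CompleteSpace X]
    (J : Submodule ℝ X) (hJ : IsClosed (J : Set X))
    (hprox : ∀ x : X, ∃ j ∈ J, ‖x - j‖ = Metric.infDist x (J : Set X)) :
    (∃ W : Submodule ℝ X,
        (W : Set X) = {x : X | ‖x‖ = Metric.infDist x (J : Set X)}) ↔
      ∃ p : X →ₗ[ℝ] X,
        (∀ x, p x ∈ J ∧ ‖x - p x‖ = Metric.infDist x (J : Set X)) ∧
        (∀ x, ∀ j ∈ J, ‖x - j‖ = Metric.infDist x (J : Set X) → j = p x) := by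
  constructor
  · rintro ⟨W, hW⟩
    have hWmem : ∀ x : X, x ∈ W ↔ ‖x‖ = Metric.infDist x (J : Set X) := by
      intro x
      constructor
      · intro hx
        have : x ∈ (W : Set X) := hx
        rw [hW] at this; exact this
      · intro hx
        have : x ∈ (W : Set X) := by rw [hW]; exact hx
        exact this
    -- elements of J ∩ W are zero
    have hJW : ∀ y : X, y ∈ J → y ∈ W → y = 0 := by
      intro y hyJ hyW
      have h1 : ‖y‖ = Metric.infDist y (J : Set X) := (hWmem y).1 hyW
      have h2 : Metric.infDist y (J : Set X) ≤ 0 := by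
        have := Metric.infDist_le_dist_of_mem (x := y) hyJ
        simpa using this
      have := norm_nonneg y
      have : ‖y‖ = 0 := le_antisymm (h1 ▸ h2) (norm_nonneg y)
      exact norm_eq_zero.mp this
    -- nearest-point differences lie in W
    have hmemW : ∀ x j : X, j ∈ J → ‖x - j‖ = Metric.infDist x (J : Set X) → x - j ∈ W := by
      intro x j hj hxj
      rw [hWmem]
      rw [infDist_sub_mem J hj x]
      exact hxj
    choose f hfJ hfd using hprox
    have uniq : ∀ x j, j ∈ J → ‖x - j‖ = Metric.infDist x (J : Set X) → j = f x := by
      intro x j hj hxj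
      have h1 : x - j ∈ W := hmemW x j hj hxj
      have h2 : x - f x ∈ W := hmemW x (f x) (hfJ x) (hfd x)
      have h3 : j - f x ∈ W := by
        have := W.sub_mem h2 h1
        simpa [sub_sub_sub_cancel_left] using this
      have h4 : j - f x ∈ J := J.sub_mem hj (hfJ x)
      have := hJW _ h4 h3
      exact sub_eq_zero.mp this
    have hadd : ∀ x y, f (x + y) = f x + f y := by
      intro x y
      refine (uniq (x + y) (f x + f y) (J.add_mem (hfJ x) (hfJ y)) ?_).symm
      have h1 : (x - f x) + (y - f y) ∈ W :=
        W.add_mem (hmemW x (f x) (hfJ x) (hfd x)) (hmemW y (f y) (hfJ y) (hfd y))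
      have h2 : (x + y) - (f x + f y) ∈ W := by
        have : (x - f x) + (y - f y) = (x + y) - (f x + f y) := by abel
        rwa [this] at h1
      have := (hWmem _).1 h2
      rw [this, infDist_sub_mem J (J.add_mem (hfJ x) (hfJ y))]
    have hsmul : ∀ (c : ℝ) (x : X), f (c • x) = c • f x := by
      intro c x
      refine (uniq (c • x) (c • f x) (J.smul_mem c (hfJ x)) ?_).symm
      have h1 : c • (x - f x) ∈ W := W.smul_mem c (hmemW x (f x) (hfJ x) (hfd x))
      have h2 : c • x - c • f x ∈ W := by
        rwa [smul_sub] at h1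
      have := (hWmem _).1 h2
      rw [this, infDist_sub_mem J (J.smul_mem c (hfJ x))]
    refine ⟨{ toFun := f, map_add' := hadd, map_smul' := hsmul }, ?_, ?_⟩
    · intro x; exact ⟨hfJ x, hfd x⟩
    · intro x j hj hxj; exact uniq x j hj hxj
  · rintro ⟨p, hp, huniq⟩
    refine ⟨LinearMap.ker p, ?_⟩
    ext x
    simp only [SetLike.mem_coe, LinearMap.mem_ker, Set.mem_setOf_eq]
    constructor
    · intro hx
      have := (hp x).2
      rwa [hx, sub_zero] at this
    · intro hx
      have h0 : (0 : X) = p x := by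
        refine huniq x 0 J.zero_mem ?_
        simpa using hx
      exact h0.symm
end

section
/- Let X = ℝ² with the supremum norm ‖(a,b)‖ = max(|a|, |b|), and let J be the one-dimensional subspace of X spanned by a nonzero vector (u, v). Then the metric complement J₀ = {x ∈ X : ‖x‖ = dist(x, J)} is a linear subspace of X if and only if u·v ≠ 0. -/
open Metric

private lemma norm_fin2' (x : Fin 2 → ℝ) : ‖x‖ = max |x 0| |x 1| := by
  apply le_antisymm
  · refine (pi_norm_le_iff_of_nonneg (le_trans (abs_nonneg _) (le_max_left _ _))).mpr ?_
    intro i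
    fin_cases i
    · simp [Real.norm_eq_abs]
    · simp [Real.norm_eq_abs]
  · exact max_le (by simpa [Real.norm_eq_abs] using norm_le_pi_norm x 0)
      (by simpa [Real.norm_eq_abs] using norm_le_pi_norm x 1)

private lemma le_infDist_span' (u v : ℝ) (x : Fin 2 → ℝ) (c : ℝ)
    (h : ∀ t : ℝ, c ≤ ‖x - t • ![u,v]‖) :
    c ≤ Metric.infDist x ((Submodule.span ℝ {![u, v]} : Submodule ℝ (Fin 2 → ℝ)) : Set (Fin 2 → ℝ)) := by
  rw [Metric.infDist_eq_iInf]
  refine le_ciInf ?_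
  rintro ⟨y, hy⟩
  rcases Submodule.mem_span_singleton.mp hy with ⟨t, rfl⟩
  rw [dist_eq_norm]
  exact h t

private lemma infDist_span_le' (u v : ℝ) (x : Fin 2 → ℝ) (t : ℝ) :
    Metric.infDist x ((Submodule.span ℝ {![u, v]} : Submodule ℝ (Fin 2 → ℝ)) : Set (Fin 2 → ℝ))
      ≤ ‖x - t • ![u,v]‖ := by
  rw [← dist_eq_norm]
  exact Metric.infDist_le_dist_of_mem (Submodule.mem_span_singleton.mpr ⟨t, rfl⟩)

private lemma abs_sub_eq_add_imp_mul_nonpos' (p q : ℝ) (h : |p| + |q| ≤ |p - q|) : p * q ≤ 0 := by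
  nlinarith [sq_abs (p - q), sq_abs p, sq_abs q, abs_nonneg p, abs_nonneg q,
    mul_nonneg (abs_nonneg p) (abs_nonneg q), abs_nonneg (p-q), le_abs_self (p*q), abs_mul p q]

private lemma key_arith' (u v a b : ℝ) (hu : u ≠ 0) (hv : v ≠ 0)
    (h : max |a| |b| * (|u| + |v|) ≤ |v*a - u*b|) :
    a*b*(u*v) ≤ 0 ∧ |a| = |b| := by
  have h1 : |v*a - u*b| ≤ |v| * |a| + |u| * |b| := by
    calc |v*a - u*b| ≤ |v*a| + |u*b| := abs_sub _ _
    _ = |v| * |a| + |u| * |b| := by rw [abs_mul, abs_mul]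
  have hM1 : |a| ≤ max |a| |b| := le_max_left _ _
  have hM2 : |b| ≤ max |a| |b| := le_max_right _ _
  have hup : (0:ℝ) < |u| := abs_pos.mpr hu
  have hvp : (0:ℝ) < |v| := abs_pos.mpr hv
  have e1 : |u| * |b| ≤ |u| * max |a| |b| := by nlinarith
  have e2 : |v| * |a| ≤ |v| * max |a| |b| := by nlinarith
  have ha : |a| = max |a| |b| := by
    have h5 : |v| * max |a| |b| ≤ |v| * |a| := by nlinarith
    have := le_of_mul_le_mul_left h5 hvp
    linarith
  have hb : |b| = max |a| |b| := by
    have h5 : |u| * max |a| |b| ≤ |u| * |b| := by nlinarith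
    have := le_of_mul_le_mul_left h5 hup
    linarith
  refine ⟨?_, ha.trans hb.symm⟩
  have heq : |v*a| + |u*b| ≤ |v*a - u*b| := by
    rw [abs_mul, abs_mul]; nlinarith
  have hnp := abs_sub_eq_add_imp_mul_nonpos' _ _ heq
  nlinarith [hnp]

private lemma line_case_pos' (a b : ℝ) (hab : a*b ≤ 0) (habs : |a| = |b|) : b = -a := by
  have h2 : |a| * |b| = -(a*b) := by rw [← abs_mul, abs_of_nonpos hab]
  have h3 : a^2 = -(a*b) := by rw [← sq_abs a, ← h2, ← habs]; ring
  have h4 : (a+b)^2 = 0 := by nlinarith [sq_abs a, sq_abs b, habs]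
  have := pow_eq_zero_iff (n := 2) (by norm_num) |>.mp h4
  linarith

private lemma line_case_neg' (a b : ℝ) (hab : 0 ≤ a*b) (habs : |a| = |b|) : b = a := by
  have := line_case_pos' a (-b) (by nlinarith) (by rw [abs_neg, habs])
  linarith

private lemma abs_add_same_sign' (u v : ℝ) (h : 0 ≤ u*v) : |u+v| = |u| + |v| := by
  rcases abs_cases u with ⟨h1,h1'⟩|⟨h1,h1'⟩ <;> rcases abs_cases v with ⟨h2,h2'⟩|⟨h2,h2'⟩ <;>
    rcases abs_cases (u+v) with ⟨h3,h3'⟩|⟨h3,h3'⟩ <;> nlinarith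

private lemma norm_le_dist_line' (u v s a t : ℝ) (habs1 : |v - u*s| = |u|+|v|)
    (hpos : (0:ℝ) < |u|+|v|) :
    |a| ≤ ‖(a • ![(1:ℝ), s]) - t • ![u, v]‖ := by
  have c0 : ((a • ![(1:ℝ), s]) - t • ![u, v]) 0 = a - t*u := by simp
  have c1 : ((a • ![(1:ℝ), s]) - t • ![u, v]) 1 = a*s - t*v := by simp
  set N := ‖(a • ![(1:ℝ), s]) - t • ![u, v]‖ with hN
  have b0 : |a - t*u| ≤ N := by rw [hN, norm_fin2', c0, c1]; exact le_max_left _ _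
  have b1 : |a*s - t*v| ≤ N := by rw [hN, norm_fin2', c0, c1]; exact le_max_right _ _
  have key : |a| * (|u|+|v|) ≤ N * (|u|+|v|) := by
    have e : v*(a - t*u) - u*(a*s - t*v) = a*(v - u*s) := by ring
    have e2 : |a| * (|u|+|v|) = |v*(a - t*u) - u*(a*s - t*v)| := by
      rw [e, abs_mul, habs1]
    rw [e2]
    calc |v * (a-t*u) - u * (a*s-t*v)| ≤ |v * (a-t*u)| + |u * (a*s-t*v)| := abs_sub _ _
      _ = |v| * |a-t*u| + |u| * |a*s-t*v| := by rw [abs_mul, abs_mul]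
      _ ≤ |v| * N + |u| * N := by
          have q0 := mul_le_mul_of_nonneg_left b0 (abs_nonneg v)
          have q1 := mul_le_mul_of_nonneg_left b1 (abs_nonneg u)
          linarith
      _ = N * (|u|+|v|) := by ring
  exact le_of_mul_le_mul_right key hpos

private lemma back_case' (u v s : ℝ) (hu : u ≠ 0) (hv : v ≠ 0)
    (hs1 : |s| = 1)
    (habs1 : |v - u*s| = |u| + |v|)
    (habs2 : |u - s*v| = |u| + |v|)
    (hline : ∀ a b : ℝ, a*b*(u*v) ≤ 0 → |a| = |b| → b = s*a) :
    ((Submodule.span ℝ {![(1:ℝ), s]} : Submodule ℝ (Fin 2 → ℝ)) : Set (Fin 2 → ℝ)) =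
      {x : Fin 2 → ℝ |
        ‖x‖ = Metric.infDist x ((Submodule.span ℝ {![u, v]} : Submodule ℝ (Fin 2 → ℝ)) :
          Set (Fin 2 → ℝ))} := by
  have hsum : (0:ℝ) < |u| + |v| := add_pos (abs_pos.mpr hu) (abs_pos.mpr hv)
  have hden : u - s*v ≠ 0 := by
    intro h
    rw [h, abs_zero] at habs2
    linarith
  ext x
  simp only [SetLike.mem_coe, Set.mem_setOf_eq]
  rw [Submodule.mem_span_singleton]
  constructor
  · rintro ⟨a, rfl⟩
    have hy0 : (a • ![(1:ℝ), s]) 0 = a := by simp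
    have hy1 : (a • ![(1:ℝ), s]) 1 = a * s := by simp
    have hnorm : ‖a • ![(1:ℝ), s]‖ = |a| := by
      rw [norm_fin2', hy0, hy1, abs_mul, hs1, mul_one, max_self]
    rw [hnorm]
    apply le_antisymm
    · exact le_infDist_span' u v _ |a| (fun t => norm_le_dist_line' u v s a t habs1 hsum)
    · have h6 := infDist_span_le' u v (a • ![(1:ℝ), s]) 0
      rw [zero_smul, sub_zero, hnorm] at h6
      exact h6
  · intro hx
    set t : ℝ := (x 0 - s * x 1)/(u - s*v) with ht
    have c0 : (x - t • ![u,v]) 0 = s*(u*x 1 - v*x 0)/(u - s*v) := by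
      have : (x - t • ![u,v]) 0 = x 0 - t * u := by simp
      rw [this, ht]
      field_simp
      ring
    have c1 : (x - t • ![u,v]) 1 = (u*x 1 - v*x 0)/(u - s*v) := by
      have : (x - t • ![u,v]) 1 = x 1 - t * v := by simp
      rw [this, ht]
      field_simp
      ring
    have hval : ‖x - t • ![u,v]‖ = |v*x 0 - u*x 1| / (|u|+|v|) := by
      rw [norm_fin2', c0, c1]
      rw [abs_div, abs_div, abs_mul, hs1, one_mul, habs2, max_self,
        abs_sub_comm (u*x 1) (v*x 0)]
    have hle2 : ‖x‖ ≤ |v*x 0 - u*x 1| / (|u|+|v|) := by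
      rw [hx, ← hval]
      exact infDist_span_le' u v x t
    have hle : max |x 0| |x 1| * (|u|+|v|) ≤ |v*x 0 - u*x 1| := by
      rw [norm_fin2'] at hle2
      calc max |x 0| |x 1| * (|u|+|v|) ≤ (|v*x 0 - u*x 1| / (|u|+|v|)) * (|u|+|v|) := by
            exact mul_le_mul_of_nonneg_right hle2 (le_of_lt hsum)
        _ = |v*x 0 - u*x 1| := div_mul_cancel₀ _ (ne_of_gt hsum)
    obtain ⟨hmul, habs⟩ := key_arith' u v (x 0) (x 1) hu hv hle
    have hx1 : x 1 = s * x 0 := hline (x 0) (x 1) hmul habs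
    refine ⟨x 0, ?_⟩
    funext i
    fin_cases i
    · simp
    · simp [hx1, mul_comm]

private lemma infDist_v0' (u : ℝ) (hu : u ≠ 0) (x : Fin 2 → ℝ) :
    Metric.infDist x ((Submodule.span ℝ {![u, (0:ℝ)]} : Submodule ℝ (Fin 2 → ℝ)) :
      Set (Fin 2 → ℝ)) = |x 1| := by
  apply le_antisymm
  · refine le_trans (infDist_span_le' u 0 x (x 0 / u)) ?_
    have c0 : (x - (x 0 / u) • ![u,(0:ℝ)]) 0 = 0 := by
      simp [div_mul_cancel₀, hu]
    have c1 : (x - (x 0 / u) • ![u,(0:ℝ)]) 1 = x 1 := by simp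
    rw [norm_fin2', c0, c1, abs_zero, max_eq_right (abs_nonneg _)]
  · apply le_infDist_span'
    intro t
    have := norm_le_pi_norm (x - t • ![u,(0:ℝ)]) 1
    simpa using this

private lemma infDist_u0' (v : ℝ) (hv : v ≠ 0) (x : Fin 2 → ℝ) :
    Metric.infDist x ((Submodule.span ℝ {![(0:ℝ), v]} : Submodule ℝ (Fin 2 → ℝ)) :
      Set (Fin 2 → ℝ)) = |x 0| := by
  apply le_antisymm
  · refine le_trans (infDist_span_le' 0 v x (x 1 / v)) ?_
    have c0 : (x - (x 1 / v) • ![(0:ℝ),v]) 0 = x 0 := by simp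
    have c1 : (x - (x 1 / v) • ![(0:ℝ),v]) 1 = 0 := by
      simp [div_mul_cancel₀, hv]
    rw [norm_fin2', c0, c1, abs_zero, max_eq_left (abs_nonneg _)]
  · apply le_infDist_span'
    intro t
    have := norm_le_pi_norm (x - t • ![(0:ℝ),v]) 0
    simpa using this

/-- In `X = ℝ²` with the supremum norm, for `J` the span of a nonzero vector
`(u, v)`, the metric complement `J₀` is a linear subspace of `X` iff `u * v ≠ 0`. -/
theorem metric_complement_subspace_iff_of_sup_norm_plane
    (u v : ℝ) (huv : ![u, v] ≠ 0) :
    (∃ W : Submodule ℝ (Fin 2 → ℝ),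
        (W : Set (Fin 2 → ℝ)) =
          {x : Fin 2 → ℝ |
            ‖x‖ = Metric.infDist x ((Submodule.span ℝ {![u, v]} : Submodule ℝ (Fin 2 → ℝ)) :
              Set (Fin 2 → ℝ))}) ↔ u * v ≠ 0 := by
  constructor
  · rintro ⟨W, hW⟩ h0
    rcases mul_eq_zero.mp h0 with hu0 | hv0
    · -- u = 0, v ≠ 0
      have hv : v ≠ 0 := by
        intro hv0
        apply huv
        subst hu0 hv0
        funext i; fin_cases i <;> simp
      subst hu0
      have mem_iff : ∀ x : Fin 2 → ℝ, x ∈ W ↔ ‖x‖ = |x 0| := by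
        intro x
        rw [← SetLike.mem_coe, hW, Set.mem_setOf_eq, infDist_u0' v hv x]
      have h1 : (![(1:ℝ), 1] : Fin 2 → ℝ) ∈ W := by
        rw [mem_iff, norm_fin2']
        norm_num
      have h2 : (![(-1:ℝ), 1] : Fin 2 → ℝ) ∈ W := by
        rw [mem_iff, norm_fin2']
        norm_num
      have h3 := W.add_mem h1 h2
      rw [mem_iff, norm_fin2'] at h3
      have e0 : ((![(1:ℝ), 1] : Fin 2 → ℝ) + ![(-1:ℝ), 1]) 0 = 0 := by
        simp
      have e1 : ((![(1:ℝ), 1] : Fin 2 → ℝ) + ![(-1:ℝ), 1]) 1 = 2 := by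
        norm_num
      rw [e0, e1] at h3
      norm_num at h3
    · -- v = 0, u ≠ 0
      have hu : u ≠ 0 := by
        intro hu0
        apply huv
        subst hu0 hv0
        funext i; fin_cases i <;> simp
      subst hv0
      have mem_iff : ∀ x : Fin 2 → ℝ, x ∈ W ↔ ‖x‖ = |x 1| := by
        intro x
        rw [← SetLike.mem_coe, hW, Set.mem_setOf_eq, infDist_v0' u hu x]
      have h1 : (![(1:ℝ), 1] : Fin 2 → ℝ) ∈ W := by
        rw [mem_iff, norm_fin2']
        norm_num
      have h2 : (![(1:ℝ), -1] : Fin 2 → ℝ) ∈ W := by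
        rw [mem_iff, norm_fin2']
        norm_num
      have h3 := W.add_mem h1 h2
      rw [mem_iff, norm_fin2'] at h3
      have e0 : ((![(1:ℝ), 1] : Fin 2 → ℝ) + ![(1:ℝ), -1]) 0 = 2 := by
        norm_num
      have e1 : ((![(1:ℝ), 1] : Fin 2 → ℝ) + ![(1:ℝ), -1]) 1 = 0 := by
        simp
      rw [e0, e1] at h3
      norm_num at h3
  · intro h0
    have hu : u ≠ 0 := fun h => h0 (by rw [h, zero_mul])
    have hv : v ≠ 0 := fun h => h0 (by rw [h, mul_zero])
    rcases h0.lt_or_gt with hneg | hpos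
    · -- u*v < 0, take s = 1
      refine ⟨Submodule.span ℝ {![(1:ℝ), 1]}, ?_⟩
      apply back_case' u v 1 hu hv (by norm_num)
      · have := abs_add_same_sign' v (-u) (by nlinarith)
        rw [abs_neg] at this
        calc |v - u*1| = |v + -u| := by ring_nf
          _ = |u| + |v| := by rw [this]; ring
      · have := abs_add_same_sign' u (-v) (by nlinarith)
        rw [abs_neg] at this
        calc |u - 1*v| = |u + -v| := by ring_nf
          _ = |u| + |v| := this
      · intro a b hmul habs
        have hab : 0 ≤ a*b := by nlinarith
        have := line_case_neg' a b hab habs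
        linarith
    · -- u*v > 0, take s = -1
      refine ⟨Submodule.span ℝ {![(1:ℝ), -1]}, ?_⟩
      apply back_case' u v (-1) hu hv (by norm_num)
      · have := abs_add_same_sign' v u (by nlinarith)
        calc |v - u*(-1)| = |v + u| := by ring_nf
          _ = |u| + |v| := by rw [this]; ring
      · have := abs_add_same_sign' u v (by nlinarith)
        calc |u - (-1)*v| = |u + v| := by ring_nf
          _ = |u| + |v| := this
      · intro a b hmul habs
        have hab : a*b ≤ 0 := by nlinarith
        have := line_case_pos' a b hab habs
        linarith
end

section
/- Let Ω be a nonempty compact Hausdorff topological space, let C(Ω) be the Banach space of continuous real-valued functions on Ω with the supremum norm, and let J be the closed subspace of constant functions in C(Ω). Then the pair (C(Ω), J) has the quotient lifting property (QLP) if and only if Ω has at most 2 points. -/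
/-- The pair `(X, J)` has the quotient lifting property (QLP): every bounded operator
`S : Y → X/J` from a Banach space `Y` lifts to `T : Y → X` with `π ∘ T = S` and `‖T‖ = ‖S‖`. -/
def HasQLP (X : Type*) [NormedAddCommGroup X] [NormedSpace ℝ X] (J : Submodule ℝ X) : Prop :=
  ∀ (Y : Type*) [NormedAddCommGroup Y] [NormedSpace ℝ Y] [CompleteSpace Y]
    (S : Y →L[ℝ] X ⧸ J), ∃ T : Y →L[ℝ] X, (∀ y, J.mkQ (T y) = S y) ∧ ‖T‖ = ‖S‖

open ContinuousMap Set

/-- An auxiliary copy of `ℝ × ℝ` which will receive a custom norm. -/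
def QLPAux : Type := ℝ × ℝ

instance : AddCommGroup QLPAux := inferInstanceAs (AddCommGroup (ℝ × ℝ))
noncomputable instance : Module ℝ QLPAux := inferInstanceAs (Module ℝ (ℝ × ℝ))
instance : FiniteDimensional ℝ QLPAux := inferInstanceAs (FiniteDimensional ℝ (ℝ × ℝ))

/-- The identification of `QLPAux` with `ℝ × ℝ`. -/
noncomputable def QLPAux.equiv : QLPAux ≃ₗ[ℝ] ℝ × ℝ := LinearEquiv.refl ℝ (ℝ × ℝ)

universe uO uY

variable {Ω : Type uO} [TopologicalSpace Ω] [CompactSpace Ω] [T2Space Ω] [Nonempty Ω]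

set_option maxHeartbeats 1200000 in
lemma not_qlp_of_three {p q r : Ω} (hpq : p ≠ q) (hpr : p ≠ r) (hqr : q ≠ r) :
    ¬ HasQLP.{uO, uY} C(Ω, ℝ) (Submodule.span ℝ {(1 : C(Ω, ℝ))}) := by
  classical
  intro hQLP
  set Jm : Submodule ℝ C(Ω, ℝ) := Submodule.span ℝ {(1 : C(Ω, ℝ))} with hJm
  -- pairwise disjoint open neighborhoods
  obtain ⟨U₁, V₁, hU₁, hV₁, hpU₁, hqV₁, hd₁⟩ := t2_separation hpq
  obtain ⟨U₂, V₂, hU₂, hV₂, hpU₂, hrV₂, hd₂⟩ := t2_separation hpr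
  obtain ⟨U₃, V₃, hU₃, hV₃, hqU₃, hrV₃, hd₃⟩ := t2_separation hqr
  set U : Set Ω := U₁ ∩ U₂ with hU
  set V : Set Ω := V₁ ∩ U₃ with hV
  set W : Set Ω := V₂ ∩ V₃ with hW
  have hUopen : IsOpen U := hU₁.inter hU₂
  have hVopen : IsOpen V := hV₁.inter hU₃
  have hWopen : IsOpen W := hV₂.inter hV₃
  have hpU : p ∈ U := ⟨hpU₁, hpU₂⟩
  have hqV : q ∈ V := ⟨hqV₁, hqU₃⟩
  have hrW : r ∈ W := ⟨hrV₂, hrV₃⟩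
  have hUV : ∀ x, x ∈ U → x ∉ V := fun x hx hx' => hd₁.le_bot ⟨hx.1, hx'.1⟩
  have hUW : ∀ x, x ∈ U → x ∉ W := fun x hx hx' => hd₂.le_bot ⟨hx.2, hx'.1⟩
  have hVW : ∀ x, x ∈ V → x ∉ W := fun x hx hx' => hd₃.le_bot ⟨hx.2, hx'.2⟩
  -- Urysohn functions
  have urysohn : ∀ (A : Set Ω) (z : Ω), IsOpen A → z ∈ A →
      ∃ f : C(Ω, ℝ), f z = 1 ∧ (∀ x, x ∉ A → f x = 0) ∧ ∀ x, f x ∈ Icc (0 : ℝ) 1 := by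
    intro A z hA hz
    obtain ⟨f, hf0, hf1, hf01⟩ := exists_continuous_zero_one_of_isClosed
      (isClosed_compl_iff.mpr hA) (isClosed_singleton (x := z))
      (disjoint_left.mpr fun x hx hx' => hx (by rwa [mem_singleton_iff.mp hx']))
    exact ⟨f, hf1 rfl, fun x hx => hf0 hx, hf01⟩
  obtain ⟨u, hup, hu0, hu01⟩ := urysohn U p hUopen hpU
  obtain ⟨v, hvq, hv0, hv01⟩ := urysohn V q hVopen hqV
  obtain ⟨w, hwr, hw0, hw01⟩ := urysohn W r hWopen hrW
  -- values
  have huq : u q = 0 := hu0 q (fun h => hUV q h hqV)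
  have hur : u r = 0 := hu0 r (fun h => hUW r h hrW)
  have hvp : v p = 0 := hv0 p (hUV p hpU)
  have hvr : v r = 0 := hv0 r (fun h => hVW r h hrW)
  have hwp : w p = 0 := hw0 p (hUW p hpU)
  have hwq : w q = 0 := hw0 q (hVW q hqV)
  set g : C(Ω, ℝ) := v - w with hg
  have hgval : ∀ x, g x = v x - w x := fun x => rfl
  -- pointwise bounds
  have habs : ∀ (s t : ℝ) (x : Ω), |s * u x + t * (g x)| ≤ max |s| |t| := by
    intro s t x
    have h1 : u x ∈ Icc (0:ℝ) 1 := hu01 x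
    have h2 : v x ∈ Icc (0:ℝ) 1 := hv01 x
    have h3 : w x ∈ Icc (0:ℝ) 1 := hw01 x
    have hle1 : |s| ≤ max |s| |t| := le_max_left _ _
    have hle2 : |t| ≤ max |s| |t| := le_max_right _ _
    rw [hgval]
    by_cases hxU : x ∈ U
    · have hv' : v x = 0 := hv0 x (hUV x hxU)
      have hw' : w x = 0 := hw0 x (hUW x hxU)
      rw [hv', hw']
      simp only [sub_zero, mul_zero, add_zero]
      calc |s * u x| = |s| * |u x| := abs_mul _ _
        _ ≤ |s| * 1 := by
            apply mul_le_mul_of_nonneg_left _ (abs_nonneg s)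
            rw [abs_le]; constructor <;> linarith [h1.1, h1.2]
        _ = |s| := mul_one _
        _ ≤ _ := hle1
    · have hu' : u x = 0 := hu0 x hxU
      rw [hu', mul_zero, zero_add]
      by_cases hxV : x ∈ V
      · have hw' : w x = 0 := hw0 x (hVW x hxV)
        rw [hw', sub_zero]
        calc |t * v x| = |t| * |v x| := abs_mul _ _
          _ ≤ |t| * 1 := by
              apply mul_le_mul_of_nonneg_left _ (abs_nonneg t)
              rw [abs_le]; constructor <;> linarith [h2.1, h2.2]
          _ = |t| := mul_one _
          _ ≤ _ := hle2
      · have hv' : v x = 0 := hv0 x hxV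
        rw [hv', zero_sub, mul_neg]
        rw [abs_neg]
        calc |t * w x| = |t| * |w x| := abs_mul _ _
          _ ≤ |t| * 1 := by
              apply mul_le_mul_of_nonneg_left _ (abs_nonneg t)
              rw [abs_le]; constructor <;> linarith [h3.1, h3.2]
          _ = |t| := mul_one _
          _ ≤ _ := hle2
  -- the quotient space
  haveI : IsClosed (Jm : Set C(Ω, ℝ)) := Submodule.closed_of_finiteDimensional _
  -- the linear map from QLPAux into the quotient
  let φ : QLPAux →ₗ[ℝ] (C(Ω, ℝ) ⧸ Jm) :=
    (((LinearMap.toSpanSingleton ℝ _ (Submodule.Quotient.mk u : C(Ω, ℝ) ⧸ Jm)).comp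
        (LinearMap.fst ℝ ℝ ℝ)) +
      ((LinearMap.toSpanSingleton ℝ _ (Submodule.Quotient.mk g : C(Ω, ℝ) ⧸ Jm)).comp
        (LinearMap.snd ℝ ℝ ℝ))).comp QLPAux.equiv.toLinearMap
  have hφ : ∀ y : QLPAux, φ y = Submodule.Quotient.mk
      ((QLPAux.equiv y).1 • u + (QLPAux.equiv y).2 • g) := by
    intro y
    show (QLPAux.equiv y).1 • (Submodule.Quotient.mk u : C(Ω, ℝ) ⧸ Jm)
        + (QLPAux.equiv y).2 • (Submodule.Quotient.mk g : C(Ω, ℝ) ⧸ Jm) = _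
    rw [← Submodule.Quotient.mk_smul, ← Submodule.Quotient.mk_smul, ← Submodule.Quotient.mk_add]
  -- injectivity of φ
  have hφinj : Function.Injective φ := by
    rw [← LinearMap.ker_eq_bot, Submodule.eq_bot_iff]
    intro y hy
    rw [LinearMap.mem_ker, hφ, Submodule.Quotient.mk_eq_zero] at hy
    rw [hJm, Submodule.mem_span_singleton] at hy
    obtain ⟨c, hc⟩ := hy
    set s := (QLPAux.equiv y).1
    set t := (QLPAux.equiv y).2
    have hcp := congrArg (fun f : C(Ω, ℝ) => f p) hc
    have hcq := congrArg (fun f : C(Ω, ℝ) => f q) hc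
    have hcr := congrArg (fun f : C(Ω, ℝ) => f r) hc
    simp only [ContinuousMap.add_apply, ContinuousMap.smul_apply, ContinuousMap.one_apply,
      smul_eq_mul] at hcp hcq hcr
    rw [hup, hgval, hvp, hwp] at hcp
    rw [huq, hgval, hvq, hwq] at hcq
    rw [hur, hgval, hvr, hwr] at hcr
    have hs : s = c := by linarith
    have ht : t = c := by linarith
    have ht' : -t = c := by linarith
    have hs0 : s = 0 := by linarith
    have ht0 : t = 0 := by linarith
    have h0 : QLPAux.equiv y = 0 := Prod.ext hs0 ht0
    exact QLPAux.equiv.map_eq_zero_iff.mp h0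
  -- induced norm on QLPAux
  letI : NormedAddCommGroup QLPAux := NormedAddCommGroup.induced QLPAux (C(Ω, ℝ) ⧸ Jm) φ hφinj
  letI : NormedSpace ℝ QLPAux := NormedSpace.induced ℝ QLPAux (C(Ω, ℝ) ⧸ Jm) φ
  haveI : FiniteDimensional ℝ (ULift.{uY} QLPAux) := ULift.moduleEquiv.symm.finiteDimensional
  haveI : CompleteSpace (ULift.{uY} QLPAux) := FiniteDimensional.complete ℝ _
  -- the operator S
  have hb : ∀ y : ULift.{uY} QLPAux, ‖(φ.comp (ULift.moduleEquiv :
      ULift.{uY} QLPAux ≃ₗ[ℝ] QLPAux).toLinearMap) y‖ ≤ 1 * ‖y‖ := by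
    intro y
    rw [one_mul]
    exact le_of_eq rfl
  obtain ⟨T, hT, hTnorm⟩ := hQLP (ULift.{uY} QLPAux)
    (LinearMap.mkContinuous (φ.comp (ULift.moduleEquiv :
      ULift.{uY} QLPAux ≃ₗ[ℝ] QLPAux).toLinearMap : ULift.{uY} QLPAux →ₗ[ℝ] (C(Ω, ℝ) ⧸ Jm)) 1 hb)
  have hTy : ∀ y : ULift.{uY} QLPAux, Jm.mkQ (T y) = φ y.down := hT
  have hTle : ‖T‖ ≤ 1 := by
    rw [hTnorm]
    exact LinearMap.mkContinuous_norm_le _ zero_le_one _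
  have hTbound : ∀ y : ULift.{uY} QLPAux, ‖T y‖ ≤ ‖φ y.down‖ := by
    intro y
    calc ‖T y‖ ≤ ‖T‖ * ‖y‖ := T.le_opNorm y
      _ ≤ 1 * ‖y‖ := mul_le_mul_of_nonneg_right hTle (norm_nonneg _)
      _ = ‖y‖ := one_mul _
      _ = ‖φ y.down‖ := rfl
  -- values of φ
  have hy : ∀ s t : ℝ, φ (QLPAux.equiv.symm (s, t))
      = Submodule.Quotient.mk (s • u + t • g) := by
    intro s t
    rw [hφ, LinearEquiv.apply_symm_apply]
  -- extraction of the constant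
  have key : ∀ (y : ULift.{uY} QLPAux) (h : C(Ω, ℝ)) (ρ : ℝ),
      φ y.down = Submodule.Quotient.mk h →
      ‖(Submodule.Quotient.mk h : C(Ω, ℝ) ⧸ Jm)‖ ≤ ρ →
      ∃ c : ℝ, T y = h + c • (1 : C(Ω, ℝ)) ∧ ∀ x, |h x + c| ≤ ρ := by
    intro y h ρ hyh hρ
    have h1 : Jm.mkQ (T y) = Submodule.Quotient.mk h := by rw [hTy y, hyh]
    rw [Submodule.mkQ_apply] at h1
    have hmem : T y - h ∈ Jm := (Submodule.Quotient.eq _).mp h1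
    rw [hJm, Submodule.mem_span_singleton] at hmem
    obtain ⟨c, hc⟩ := hmem
    have hTh : T y = h + c • (1 : C(Ω, ℝ)) := by rw [hc]; abel
    refine ⟨c, hTh, fun x => ?_⟩
    have hb2 : ‖T y‖ ≤ ρ := (hTbound y).trans (by rw [hyh]; exact hρ)
    rw [hTh] at hb2
    have h3 := ((h + c • (1 : C(Ω, ℝ))).norm_coe_le_norm x).trans hb2
    simpa [Real.norm_eq_abs] using h3
  -- norm bounds for the three classes
  have hnu : ‖(Submodule.Quotient.mk u : C(Ω, ℝ) ⧸ Jm)‖ ≤ 1/2 := by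
    have heq : (Submodule.Quotient.mk u : C(Ω, ℝ) ⧸ Jm)
        = Submodule.Quotient.mk (u - (1/2 : ℝ) • 1) := by
      rw [Submodule.Quotient.eq, hJm, Submodule.mem_span_singleton]
      exact ⟨1/2, by ext x; simp⟩
    rw [heq]
    refine (Submodule.Quotient.norm_mk_le _ _).trans ?_
    rw [ContinuousMap.norm_le _ (by norm_num)]
    intro x
    have hx := hu01 x
    rw [ContinuousMap.sub_apply, ContinuousMap.smul_apply, ContinuousMap.one_apply,
      Real.norm_eq_abs, smul_eq_mul, mul_one, abs_le]
    constructor <;> linarith [hx.1, hx.2]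
  have hng : ‖(Submodule.Quotient.mk g : C(Ω, ℝ) ⧸ Jm)‖ ≤ 1 := by
    refine (Submodule.Quotient.norm_mk_le _ _).trans ?_
    rw [ContinuousMap.norm_le _ zero_le_one]
    intro x
    have := habs 0 1 x
    simpa [Real.norm_eq_abs] using this
  have hnug : ‖(Submodule.Quotient.mk (u + g) : C(Ω, ℝ) ⧸ Jm)‖ ≤ 1 := by
    refine (Submodule.Quotient.norm_mk_le _ _).trans ?_
    rw [ContinuousMap.norm_le _ zero_le_one]
    intro x
    have := habs 1 1 x
    simpa [Real.norm_eq_abs] using this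
  -- the three applications
  obtain ⟨c₁, hc₁, hc₁b⟩ := key (ULift.up (QLPAux.equiv.symm (1, 0))) u (1/2)
    (by show φ (QLPAux.equiv.symm ((1:ℝ), (0:ℝ))) = _; rw [hy]; congr 1; simp) hnu
  obtain ⟨c₂, hc₂, hc₂b⟩ := key (ULift.up (QLPAux.equiv.symm (0, 1))) g 1
    (by show φ (QLPAux.equiv.symm ((0:ℝ), (1:ℝ))) = _; rw [hy]; congr 1; simp) hng
  obtain ⟨c₃, hc₃, hc₃b⟩ := key (ULift.up (QLPAux.equiv.symm (1, 1))) (u + g) 1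
    (by show φ (QLPAux.equiv.symm ((1:ℝ), (1:ℝ))) = _; rw [hy]; congr 1; simp) hnug
  -- pin down the constants
  have hgq : g q = 1 := by rw [hgval, hvq, hwq]; ring
  have hgr : g r = -1 := by rw [hgval, hvr, hwr]; ring
  have hgp : g p = 0 := by rw [hgval, hvp, hwp]; ring
  have e1 : |1 + c₁| ≤ 1/2 := by have := hc₁b p; rwa [hup] at this
  have e2 : |c₁| ≤ 1/2 := by have := hc₁b q; rwa [huq, zero_add] at this
  have f1 : |1 + c₂| ≤ 1 := by have := hc₂b q; rwa [hgq] at this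
  have f2 : |-1 + c₂| ≤ 1 := by have := hc₂b r; rwa [hgr] at this
  have g1 : |1 + c₃| ≤ 1 := by
    have := hc₃b p
    rwa [ContinuousMap.add_apply, hup, hgp, add_zero] at this
  have g2 : |-1 + c₃| ≤ 1 := by
    have := hc₃b r
    rwa [ContinuousMap.add_apply, hur, hgr, zero_add] at this
  rw [abs_le] at e1 e2 f1 f2 g1 g2
  have hc1 : c₁ = -(1/2) := by linarith [e1.2, e2.1]
  have hc2 : c₂ = 0 := by linarith [f1.2, f2.1]
  have hc3 : c₃ = 0 := by linarith [g1.2, g2.1]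
  have hadd : (ULift.up (QLPAux.equiv.symm ((1:ℝ), (1:ℝ))) : ULift.{uY} QLPAux)
      = ULift.up (QLPAux.equiv.symm (1, 0)) + ULift.up (QLPAux.equiv.symm (0, 1)) := by
    have h11 : ((1:ℝ), (1:ℝ)) = ((1:ℝ), (0:ℝ)) + ((0:ℝ), (1:ℝ)) := by simp
    rw [h11, map_add]
    rfl
  have hTadd : T (ULift.up (QLPAux.equiv.symm (1, 1)))
      = T (ULift.up (QLPAux.equiv.symm (1, 0))) + T (ULift.up (QLPAux.equiv.symm (0, 1))) := by
    rw [hadd, map_add]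
  rw [hc₁, hc₂, hc₃] at hTadd
  have hfin := congrArg (fun f : C(Ω, ℝ) => f p) hTadd
  simp only [ContinuousMap.add_apply, ContinuousMap.smul_apply, ContinuousMap.one_apply,
    smul_eq_mul, mul_one] at hfin
  rw [hup, hgp] at hfin
  rw [hc1, hc2, hc3] at hfin
  norm_num at hfin

lemma qlp_of_subsingleton [Subsingleton Ω] :
    HasQLP C(Ω, ℝ) (Submodule.span ℝ {(1 : C(Ω, ℝ))}) := by
  have htop : (Submodule.span ℝ {(1 : C(Ω, ℝ))}) = ⊤ := by
    rw [Submodule.eq_top_iff']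
    intro f
    rw [Submodule.mem_span_singleton]
    refine ⟨f (Classical.arbitrary Ω), ?_⟩
    ext x
    simp [Subsingleton.elim x (Classical.arbitrary Ω)]
  intro Y _ _ _ S
  haveI : Subsingleton (C(Ω, ℝ) ⧸ Submodule.span ℝ {(1 : C(Ω, ℝ))}) :=
    Submodule.Quotient.subsingleton_iff.mpr htop
  have hS : S = 0 := by ext y; exact Subsingleton.elim _ _
  refine ⟨0, fun y => ?_, ?_⟩
  · rw [hS]; exact Subsingleton.elim _ _
  · rw [hS, norm_zero]
    exact ContinuousLinearMap.opNorm_zero.symm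

lemma card_le_two_of_forall (h : ∀ p q r : Ω, p = q ∨ p = r ∨ q = r) :
    Cardinal.mk Ω ≤ 2 := by
  classical
  by_cases hs : ∀ x y : Ω, x = y
  · have h1 : Cardinal.mk Ω ≤ 1 :=
      Cardinal.le_one_iff_subsingleton.mpr ⟨hs⟩
    exact h1.trans one_le_two
  · push_neg at hs
    obtain ⟨a, b, hab⟩ := hs
    have hall : ∀ x : Ω, x = a ∨ x = b := by
      intro x
      rcases h x a b with h1 | h1 | h1
      · exact Or.inl h1
      · exact Or.inr h1
      · exact absurd h1 hab
    have hinj : Function.Injective (fun x : Ω => (decide (x = a) : Bool)) := by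
      intro x y hxy
      simp only [decide_eq_decide] at hxy
      rcases hall x with h1 | h1 <;> rcases hall y with h2 | h2
      · rw [h1, h2]
      · have h3 : y = a := hxy.mp h1
        rw [h1, h3]
      · have h3 : x = a := hxy.mpr h2
        rw [h3, h2]
      · rw [h1, h2]
    have hinj' : Function.Injective (fun x : Ω => ULift.up.{uO} (decide (x = a))) :=
      ULift.up_injective.comp hinj
    have := Cardinal.mk_le_of_injective hinj'
    simpa [Cardinal.mk_uLift, Cardinal.mk_bool] using this

lemma qlp_of_two {a b : Ω} (hall : ∀ x, x = a ∨ x = b) :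
    HasQLP C(Ω, ℝ) (Submodule.span ℝ {(1 : C(Ω, ℝ))}) := by
  classical
  set Jm : Submodule ℝ C(Ω, ℝ) := Submodule.span ℝ {(1 : C(Ω, ℝ))} with hJm
  -- the linear "mean-zero representative" map
  let L : C(Ω, ℝ) →ₗ[ℝ] C(Ω, ℝ) :=
    { toFun := fun f => f - ((f a + f b) / 2) • (1 : C(Ω, ℝ))
      map_add' := by
        intro f g; ext x; simp; ring
      map_smul' := by
        intro c f; ext x; simp; ring }
  have hLval : ∀ (f : C(Ω, ℝ)) (x : Ω), L f x = f x - (f a + f b) / 2 := by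
    intro f x; simp [L]
  have hker : Jm ≤ LinearMap.ker L := by
    intro f hf
    rw [hJm, Submodule.mem_span_singleton] at hf
    obtain ⟨c, rfl⟩ := hf
    rw [LinearMap.mem_ker]
    ext x
    simp [hLval]
  have hmkL : ∀ f : C(Ω, ℝ), (Submodule.Quotient.mk (L f) : C(Ω, ℝ) ⧸ Jm)
      = Submodule.Quotient.mk f := by
    intro f
    rw [Submodule.Quotient.eq]
    rw [hJm, Submodule.mem_span_singleton]
    exact ⟨-((f a + f b) / 2), by ext x; simp [hLval]⟩
  -- norm of L f
  have hLnorm : ∀ f : C(Ω, ℝ), ‖L f‖ = |f a - f b| / 2 := by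
    intro f
    apply le_antisymm
    · rw [ContinuousMap.norm_le _ (by positivity)]
      intro x
      rw [hLval, Real.norm_eq_abs]
      rcases hall x with h | h <;> rw [h]
      · rw [show f a - (f a + f b) / 2 = (f a - f b) / 2 by ring]
        rw [abs_div, abs_two]
      · rw [show f b - (f a + f b) / 2 = -((f a - f b) / 2) by ring, abs_neg]
        rw [abs_div, abs_two]
    · have := (L f).norm_coe_le_norm a
      rw [hLval, Real.norm_eq_abs,
        show f a - (f a + f b) / 2 = (f a - f b) / 2 by ring, abs_div, abs_two] at this
      exact this
  -- quotient norm
  have hqnorm : ∀ f : C(Ω, ℝ), ‖(Submodule.Quotient.mk f : C(Ω, ℝ) ⧸ Jm)‖ = ‖L f‖ := by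
    intro f
    apply le_antisymm
    · rw [← hmkL f]; exact Submodule.Quotient.norm_mk_le _ _
    · rw [hLnorm]
      refine le_of_forall_pos_le_add ?_
      intro ε hε
      obtain ⟨g, hg, hgn⟩ := Submodule.Quotient.norm_mk_lt
        (Submodule.Quotient.mk f : C(Ω, ℝ) ⧸ Jm) hε
      have hgf : g - f ∈ Jm := (Submodule.Quotient.eq _).mp hg
      rw [hJm, Submodule.mem_span_singleton] at hgf
      obtain ⟨c, hc⟩ := hgf
      have hga : g a = f a + c := by
        have := congrArg (fun h : C(Ω, ℝ) => h a) hc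
        simp at this
        linarith
      have hgb : g b = f b + c := by
        have := congrArg (fun h : C(Ω, ℝ) => h b) hc
        simp at this
        linarith
      have h1 : |g a| ≤ ‖g‖ := by
        simpa [Real.norm_eq_abs] using g.norm_coe_le_norm a
      have h2 : |g b| ≤ ‖g‖ := by
        simpa [Real.norm_eq_abs] using g.norm_coe_le_norm b
      have : |f a - f b| / 2 ≤ ‖g‖ := by
        have : |f a - f b| = |g a - g b| := by rw [hga, hgb]; ring_nf
        rw [this]
        have := abs_sub (g a) (g b)
        calc |g a - g b| / 2 ≤ (|g a| + |g b|) / 2 := by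
              have := abs_sub_abs_le_abs_sub (g a) (g b)
              have h3 := abs_sub (g a) (g b)
              linarith [abs_sub_le (g a) 0 (g b), abs_sub (g a) (g b)]
          _ ≤ ‖g‖ := by linarith
      linarith
  -- the lifting
  intro Y _ _ _ S
  have σdef : ∀ f : C(Ω, ℝ), (Jm.liftQ L hker) (Submodule.Quotient.mk f) = L f := by
    intro f; rfl
  have bound : ∀ y : Y, ‖(Jm.liftQ L hker).comp S.toLinearMap y‖ ≤ ‖S‖ * ‖y‖ := by
    intro y
    obtain ⟨f, hf⟩ := Submodule.Quotient.mk_surjective Jm (S y)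
    have : ‖(Jm.liftQ L hker) (S y)‖ = ‖S y‖ := by
      rw [← hf, σdef, hqnorm]
    calc ‖(Jm.liftQ L hker).comp S.toLinearMap y‖ = ‖S y‖ := this
      _ ≤ ‖S‖ * ‖y‖ := S.le_opNorm y
  refine ⟨LinearMap.mkContinuous ((Jm.liftQ L hker).comp S.toLinearMap) ‖S‖ bound, ?_, ?_⟩
  · intro y
    obtain ⟨f, hf⟩ := Submodule.Quotient.mk_surjective Jm (S y)
    show Jm.mkQ ((Jm.liftQ L hker) (S y)) = S y
    rw [← hf, σdef, Submodule.mkQ_apply, hmkL]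
  · apply le_antisymm
    · exact LinearMap.mkContinuous_norm_le _ (norm_nonneg S) bound
    · apply ContinuousLinearMap.opNorm_le_bound _ (norm_nonneg _)
      intro y
      obtain ⟨f, hf⟩ := Submodule.Quotient.mk_surjective Jm (S y)
      have h1 : ‖S y‖ = ‖(Jm.liftQ L hker) (S y)‖ := by rw [← hf, σdef, hqnorm]
      rw [h1]
      exact (LinearMap.mkContinuous ((Jm.liftQ L hker).comp S.toLinearMap) ‖S‖ bound).le_opNorm y

/-- For a nonempty compact Hausdorff space `Ω` and `J` the subspace of
constant functions in `C(Ω)`, the pair `(C(Ω), J)` has the quotient lifting property iff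
`Ω` has at most two points. -/
theorem qlp_constants_iff_card_le_two
    (Ω : Type*) [TopologicalSpace Ω] [CompactSpace Ω] [T2Space Ω] [Nonempty Ω] :
    HasQLP C(Ω, ℝ) (Submodule.span ℝ {(1 : C(Ω, ℝ))}) ↔ Cardinal.mk Ω ≤ 2 := by
  constructor
  · intro hQ
    rcases Classical.em (∃ p q r : Ω, p ≠ q ∧ p ≠ r ∧ q ≠ r) with h | h
    · obtain ⟨p, q, r, h1, h2, h3⟩ := h
      exact (not_qlp_of_three h1 h2 h3 hQ).elim
    · apply card_le_two_of_forall
      intro p q r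
      by_contra hpqr
      push_neg at hpqr
      exact h ⟨p, q, r, hpqr.1, hpqr.2.1, hpqr.2.2⟩
  · intro hcard
    by_cases h2 : ∃ a b : Ω, a ≠ b
    · obtain ⟨a, b, hab⟩ := h2
      apply qlp_of_two (a := a) (b := b)
      intro x
      by_contra hx
      push_neg at hx
      have hinj : Function.Injective ![x, a, b] := by
        intro i j hij
        fin_cases i <;> fin_cases j <;>
          simp only [Matrix.cons_val_zero, Matrix.cons_val_one, Matrix.head_cons,
            Matrix.cons_val_two, Matrix.tail_cons] at hij <;>
          first
            | rfl
            | exact absurd hij hx.1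
            | exact absurd hij hx.2
            | exact absurd hij.symm hx.1
            | exact absurd hij.symm hx.2
            | exact absurd hij hab
            | exact absurd hij.symm hab
      have hinj2 : Function.Injective (fun i : ULift.{_} (Fin 3) => ![x, a, b] i.down) :=
        hinj.comp ULift.down_injective
      have h3 := Cardinal.mk_le_of_injective hinj2
      have h32 : ((3 : ℕ) : Cardinal) ≤ 2 := by
        refine le_trans ?_ (h3.trans hcard)
        simp [Cardinal.mk_uLift, Cardinal.mk_fin]
      norm_num at h32
    · push_neg at h2
      haveI : Subsingleton Ω := ⟨h2⟩
      exact qlp_of_subsingleton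
end

section
/- Let X be a real Banach space, J a closed proximinal subspace of X, and p : X → X a continuous linear map with p(x) ∈ J and ‖x − p(x)‖ = dist(x, J) for all x ∈ X. Let Ω be a compact Hausdorff space, let C(Ω, X) be the Banach space of continuous X-valued functions on Ω with the supremum norm, and let C(Ω, J) be its closed subspace of functions taking values in J. Then the map P : C(Ω, X) → C(Ω, X) given by (P f)(ω) = p(f(ω)) is a linear selection for the metric projection onto C(Ω, J): P is linear, P f ∈ C(Ω, J), and ‖f − P f‖∞ = dist(f, C(Ω, J)) for all f ∈ C(Ω, X); in particular C(Ω, J) is proximinal in C(Ω, X). -/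
/-- The subspace of `C(Ω, X)` of continuous functions taking values in a subspace `J` of `X`. -/
def valuedIn (Ω : Type*) [TopologicalSpace Ω] [CompactSpace Ω]
    (X : Type*) [NormedAddCommGroup X] [NormedSpace ℝ X] (J : Submodule ℝ X) :
    Submodule ℝ C(Ω, X) where
  carrier := {f : C(Ω, X) | ∀ ω, f ω ∈ J}
  add_mem' := fun hf hg ω => J.add_mem (hf ω) (hg ω)
  zero_mem' := fun ω => J.zero_mem
  smul_mem' := fun c f hf ω => J.smul_mem c (hf ω)

/-- If `p` is a continuous linear selection for the metric projection onto a
proximinal closed subspace `J` of a Banach space `X`, and `Ω` is compact Hausdorff, then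
`P f = p ∘ f` is a linear selection for the metric projection onto `C(Ω, J)` in `C(Ω, X)`;
in particular `C(Ω, J)` is proximinal in `C(Ω, X)`. -/
theorem linear_selection_for_continuous_functions
    (Ω : Type*) [TopologicalSpace Ω] [CompactSpace Ω] [T2Space Ω]
    (X : Type*) [NormedAddCommGroup X] [NormedSpace ℝ X] [CompleteSpace X]
    (J : Submodule ℝ X) (hJ : IsClosed (J : Set X))
    (hprox : ∀ x : X, ∃ j ∈ J, ‖x - j‖ = Metric.infDist x (J : Set X))
    (p : X →L[ℝ] X) (hpJ : ∀ x, p x ∈ J)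
    (hpdist : ∀ x, ‖x - p x‖ = Metric.infDist x (J : Set X)) :
    ∃ P : C(Ω, X) →ₗ[ℝ] C(Ω, X),
      (∀ (f : C(Ω, X)) (ω : Ω), P f ω = p (f ω)) ∧
      (∀ f : C(Ω, X), P f ∈ valuedIn Ω X J ∧
        ‖f - P f‖ = Metric.infDist f ((valuedIn Ω X J : Submodule ℝ C(Ω, X)) : Set C(Ω, X))) ∧
      (∀ f : C(Ω, X), ∃ g ∈ valuedIn Ω X J,
        ‖f - g‖ = Metric.infDist f ((valuedIn Ω X J : Submodule ℝ C(Ω, X)) : Set C(Ω, X))) := by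
  classical
  set P : C(Ω, X) →ₗ[ℝ] C(Ω, X) :=
    { toFun := fun f => (p : C(X, X)).comp f
      map_add' := by intro f g; ext ω; simp
      map_smul' := by intro c f; ext ω; simp }
  have hPapp : ∀ (f : C(Ω, X)) (ω : Ω), P f ω = p (f ω) := fun f ω => rfl
  have hPmem : ∀ f : C(Ω, X), P f ∈ valuedIn Ω X J := fun f ω => hpJ (f ω)
  have key : ∀ f : C(Ω, X),
      ‖f - P f‖ = Metric.infDist f ((valuedIn Ω X J : Submodule ℝ C(Ω, X)) : Set C(Ω, X)) := by
    intro f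
    have hne : ((valuedIn Ω X J : Submodule ℝ C(Ω, X)) : Set C(Ω, X)).Nonempty :=
      ⟨0, (valuedIn Ω X J).zero_mem⟩
    apply le_antisymm
    · refine le_of_not_gt fun hlt => ?_
      obtain ⟨g, hg, hdg⟩ := (Metric.infDist_lt_iff hne).mp hlt
      rw [dist_eq_norm] at hdg
      refine absurd hdg (not_lt.mpr ?_)
      refine ContinuousMap.norm_le _ (norm_nonneg _) |>.mpr ?_
      intro ω
      have h1 : ‖(f - P f) ω‖ = Metric.infDist (f ω) (J : Set X) := by
        simp [hPapp, hpdist (f ω)]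
      rw [h1]
      calc Metric.infDist (f ω) (J : Set X) ≤ dist (f ω) (g ω) :=
            Metric.infDist_le_dist_of_mem (hg ω)
        _ = ‖(f - g) ω‖ := by simp [dist_eq_norm]
        _ ≤ ‖f - g‖ := ContinuousMap.norm_coe_le_norm _ ω
    · have := Metric.infDist_le_dist_of_mem (x := f) (hPmem f)
      rwa [dist_eq_norm] at this
  exact ⟨P, hPapp, fun f => ⟨hPmem f, key f⟩, fun f => ⟨P f, hPmem f, key f⟩⟩
end

section
/- Let Ω be a compact metrizable topological space, let C(Ω) be the Banach space of continuous real-valued functions on Ω with the supremum norm, let D be a closed subset of Ω, and let J = {f ∈ C(Ω) : f(t) = 0 for all t ∈ D}. Then the pair (C(Ω), J) has the quotient lifting property (QLP). -/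
/-- The subspace of `C(Ω)` of functions vanishing on a subset `D` of `Ω`. -/
def vanishingIdeal (Ω : Type*) [TopologicalSpace Ω] [CompactSpace Ω] (D : Set Ω) :
    Submodule ℝ C(Ω, ℝ) where
  carrier := {f : C(Ω, ℝ) | ∀ t ∈ D, f t = 0}
  add_mem' := by
    intro f g hf hg t ht
    simp [hf t ht, hg t ht]
  zero_mem' := by intro t ht; simp
  smul_mem' := by
    intro c f hf t ht
    simp [hf t ht]

/-
Restriction `ρ : C(Ω) → C(D)` is a contraction with kernel `J`. Dugundji's construction gives a
linear extension operator `E : C(D) → C(Ω)` of norm at most one: off `D`, `E f x` is a weighted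
average of the values of `f` along a dense sequence `cᵢ` of `D`, where only the points with
`dist x cᵢ < 2 · infDist x D` carry weight, so that near a point `t ∈ D` only values of `f` near
`t` enter. With `ρ̄ : C(Ω)/J → C(D)` induced by `ρ`, the map `E ∘ ρ̄` is a section of the quotient
map of norm at most one, and composing with it lifts every `S : Y → C(Ω)/J` without increasing
the norm.
-/

open Metric TopologicalSpace

theorem abs_tsum_mul_sub_le {w a : ℕ → ℝ} {b ε : ℝ} (hw : ∀ i, 0 ≤ w i) (hws : Summable w)
    (hwa : Summable fun i => w i * a i) (h : ∀ i, w i ≠ 0 → |a i - b| ≤ ε) :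
    |∑' i, w i * a i - (∑' i, w i) * b| ≤ ε * ∑' i, w i := by
  have hsplit : ∑' i, w i * a i - (∑' i, w i) * b = ∑' i, w i * (a i - b) := by
    rw [← tsum_mul_right, ← hwa.tsum_sub (hws.mul_right b)]
    exact tsum_congr fun i => by ring
  have hterm (i : ℕ) : ‖w i * (a i - b)‖ ≤ ε * w i := by
    rcases eq_or_ne (w i) 0 with hi | hi
    · simp [hi]
    · rw [Real.norm_eq_abs, abs_mul, abs_of_nonneg (hw i), mul_comm]
      exact mul_le_mul_of_nonneg_right (h i hi) (hw i)
  rw [hsplit, ← Real.norm_eq_abs]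
  exact tsum_of_norm_bounded (hws.hasSum.mul_left ε) hterm

section QuotientLifting

variable {X Z : Type*} [NormedAddCommGroup X] [NormedSpace ℝ X] [NormedAddCommGroup Z]
  [NormedSpace ℝ Z]

theorem Submodule.norm_liftQL_le (J : Submodule ℝ X) (R : X →L[ℝ] Z)
    (h : J ≤ (R : X →ₗ[ℝ] Z).ker) : ‖J.liftQL R h‖ ≤ ‖R‖ := by
  refine ContinuousLinearMap.opNorm_le_bound _ (norm_nonneg R) fun q => ?_
  let R' := (R : X →ₗ[ℝ] Z).toAddMonoidHom.mkNormedAddGroupHom ‖R‖ R.le_opNorm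
  calc ‖J.liftQL R h q‖ ≤ ‖R'‖ * ‖q‖ := QuotientAddGroup.norm_lift_apply_le R' (fun x hx => h hx) q
    _ ≤ ‖R‖ * ‖q‖ := by
      gcongr
      exact AddMonoidHom.mkNormedAddGroupHom_norm_le _ (norm_nonneg R) _

theorem HasQLP.of_contractive_section (J : Submodule ℝ X) (L : X ⧸ J →L[ℝ] X) (hL : ‖L‖ ≤ 1)
    (hJL : ∀ q, J.mkQ (L q) = q) : HasQLP X J := by
  intro Y _ _ _ S
  refine ⟨L.comp S, fun y => hJL (S y), le_antisymm ?_ ?_⟩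
  · calc ‖L.comp S‖ ≤ ‖L‖ * ‖S‖ := L.opNorm_comp_le S
      _ ≤ ‖S‖ := mul_le_of_le_one_left (norm_nonneg S) hL
  · refine S.opNorm_le_bound (norm_nonneg _) fun y => ?_
    calc ‖S y‖ = ‖J.mkQ (L (S y))‖ := by rw [hJL]
      _ ≤ ‖L (S y)‖ := Submodule.Quotient.norm_mk_le J _
      _ ≤ ‖L.comp S‖ * ‖y‖ := (L.comp S).le_opNorm y

theorem HasQLP.of_rightInverse (R : X →L[ℝ] Z) (E : Z →L[ℝ] X) (hR : ‖R‖ ≤ 1) (hE : ‖E‖ ≤ 1)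
    (hRE : ∀ z, R (E z) = z) : HasQLP X (R : X →ₗ[ℝ] Z).ker := by
  let J := (R : X →ₗ[ℝ] Z).ker
  refine .of_contractive_section J (E.comp (J.liftQL R le_rfl)) ?_ ?_
  · exact (E.opNorm_comp_le _).trans
      (mul_le_one₀ hE (norm_nonneg _) ((J.norm_liftQL_le R le_rfl).trans hR))
  · intro q
    obtain ⟨x, rfl⟩ := J.mkQ_surjective q
    simp [J, Submodule.Quotient.eq, hRE]

end QuotientLifting

section Restriction

variable (𝕜 : Type*) {X F : Type*} [NontriviallyNormedField 𝕜] [TopologicalSpace X]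
  [CompactSpace X] [NormedAddCommGroup F] [NormedSpace 𝕜 F] (D : Set X) [CompactSpace D]

noncomputable def ContinuousMap.restrictCLM : C(X, F) →L[𝕜] C(D, F) :=
  LinearMap.mkContinuous
    { toFun := fun f => f.restrict D
      map_add' := fun _ _ => rfl
      map_smul' := fun _ _ => rfl }
    1 fun f => by
      rw [one_mul]
      exact (ContinuousMap.norm_le _ (norm_nonneg f)).2 fun t => f.norm_coe_le_norm t

theorem ContinuousMap.norm_restrictCLM_le : ‖ContinuousMap.restrictCLM 𝕜 (F := F) D‖ ≤ 1 :=
  LinearMap.mkContinuous_norm_le _ zero_le_one _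

end Restriction

section Dugundji

variable {Ω : Type*} [PseudoMetricSpace Ω] {D : Set Ω}

-- The cap at `1` makes the series of weights converge uniformly.
noncomputable def dugundjiWeight (c : ℕ → D) (i : ℕ) (x : Ω) : ℝ :=
  (1 / 2) ^ i * min (max (2 * infDist x D - dist x (c i)) 0) 1

variable (c : ℕ → D)

theorem dugundjiWeight_nonneg (i : ℕ) (x : Ω) : 0 ≤ dugundjiWeight c i x :=
  mul_nonneg (by positivity) (le_min (le_max_right _ _) zero_le_one)

theorem dugundjiWeight_le (i : ℕ) (x : Ω) : dugundjiWeight c i x ≤ (1 / 2) ^ i :=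
  mul_le_of_le_one_right (by positivity) (min_le_right _ _)

theorem dugundjiWeight_pos_iff {i : ℕ} {x : Ω} :
    0 < dugundjiWeight c i x ↔ dist x (c i) < 2 * infDist x D := by
  rw [dugundjiWeight, mul_pos_iff_of_pos_left (by positivity), lt_min_iff, lt_max_iff]
  simp only [sub_pos, lt_irrefl, or_false, zero_lt_one, and_true]

theorem continuous_dugundjiWeight (i : ℕ) : Continuous (dugundjiWeight c i) :=
  continuous_const.mul ((((continuous_infDist_pt D).const_mul 2).sub
    (continuous_id.dist continuous_const)).max continuous_const |>.min continuous_const)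

theorem summable_dugundjiWeight (x : Ω) : Summable fun i => dugundjiWeight c i x :=
  summable_geometric_two.of_nonneg_of_le (dugundjiWeight_nonneg c · x) (dugundjiWeight_le c · x)

theorem continuous_tsum_dugundjiWeight : Continuous fun x => ∑' i, dugundjiWeight c i x :=
  continuous_tsum (continuous_dugundjiWeight c) summable_geometric_two fun i x => by
    rw [Real.norm_of_nonneg (dugundjiWeight_nonneg c i x)]
    exact dugundjiWeight_le c i x

theorem tsum_dugundjiWeight_pos (hD : IsClosed D) (hc : DenseRange c) {x : Ω} (hx : x ∉ D) :
    0 < ∑' i, dugundjiWeight c i x := by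
  have hne : D.Nonempty := ⟨c 0, (c 0).2⟩
  have hr : 0 < infDist x D := (hD.notMem_iff_infDist_pos hne).1 hx
  obtain ⟨y, hy, hxy⟩ := (infDist_lt_iff hne).1 (by linarith : infDist x D < 3 / 2 * infDist x D)
  obtain ⟨i, hi⟩ := hc.exists_dist_lt ⟨y, hy⟩ (half_pos hr)
  rw [Subtype.dist_eq] at hi
  have hxi : dist x (c i) < 2 * infDist x D := by
    calc dist x (c i) ≤ dist x y + dist y (c i) := dist_triangle _ _ _
      _ < 2 * infDist x D := by linarith
  exact (summable_dugundjiWeight c x).tsum_pos (dugundjiWeight_nonneg c · x) i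
    ((dugundjiWeight_pos_iff c).2 hxi)

open Classical in
noncomputable def dugundjiExtend (f : C(D, ℝ)) (x : Ω) : ℝ :=
  if hx : x ∈ D then f ⟨x, hx⟩
  else (∑' i, dugundjiWeight c i x * f (c i)) / ∑' i, dugundjiWeight c i x

theorem dugundjiExtend_of_mem (f : C(D, ℝ)) {x : Ω} (hx : x ∈ D) :
    dugundjiExtend c f x = f ⟨x, hx⟩ := dif_pos hx

theorem dugundjiExtend_of_notMem (f : C(D, ℝ)) {x : Ω} (hx : x ∉ D) :
    dugundjiExtend c f x =
      (∑' i, dugundjiWeight c i x * f (c i)) / ∑' i, dugundjiWeight c i x := dif_neg hx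

theorem dugundjiExtend_smul (a : ℝ) (f : C(D, ℝ)) :
    dugundjiExtend c (a • f) = a • dugundjiExtend c f := by
  funext x
  by_cases hx : x ∈ D
  · simp [dugundjiExtend_of_mem c _ hx]
  · rw [Pi.smul_apply, dugundjiExtend_of_notMem c _ hx, dugundjiExtend_of_notMem c _ hx,
      smul_eq_mul, ← mul_div_assoc, ← tsum_mul_left]
    simp only [ContinuousMap.smul_apply, smul_eq_mul, mul_left_comm]

variable [CompactSpace D]

theorem norm_dugundjiWeight_mul_le (f : C(D, ℝ)) (i : ℕ) (x : Ω) :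
    ‖dugundjiWeight c i x * f (c i)‖ ≤ ‖f‖ * (1 / 2) ^ i := by
  rw [norm_mul, Real.norm_of_nonneg (dugundjiWeight_nonneg c i x), mul_comm]
  exact mul_le_mul (f.norm_coe_le_norm _) (dugundjiWeight_le c i x)
    (dugundjiWeight_nonneg c i x) (norm_nonneg f)

theorem summable_dugundjiWeight_mul (f : C(D, ℝ)) (x : Ω) :
    Summable fun i => dugundjiWeight c i x * f (c i) :=
  .of_norm_bounded (summable_geometric_two.mul_left ‖f‖)
    (norm_dugundjiWeight_mul_le c f · x)

theorem abs_dugundjiExtend_sub_le_of_notMem (hD : IsClosed D) (hc : DenseRange c)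
    (f : C(D, ℝ)) {x : Ω} (hx : x ∉ D) {b ε : ℝ}
    (h : ∀ i, dist x (c i) < 2 * infDist x D → |f (c i) - b| ≤ ε) :
    |dugundjiExtend c f x - b| ≤ ε := by
  have hσ := tsum_dugundjiWeight_pos c hD hc hx
  rw [dugundjiExtend_of_notMem c f hx, div_sub' hσ.ne', abs_div, abs_of_pos hσ, div_le_iff₀ hσ]
  exact abs_tsum_mul_sub_le (dugundjiWeight_nonneg c · x) (summable_dugundjiWeight c x)
    (summable_dugundjiWeight_mul c f x) fun i hi =>
      h i ((dugundjiWeight_pos_iff c).1 ((dugundjiWeight_nonneg c i x).lt_of_ne' hi))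

theorem abs_dugundjiExtend_le (hD : IsClosed D) (hc : DenseRange c) (f : C(D, ℝ)) (x : Ω) :
    |dugundjiExtend c f x| ≤ ‖f‖ := by
  by_cases hx : x ∈ D
  · rw [dugundjiExtend_of_mem c f hx, ← Real.norm_eq_abs]
    exact f.norm_coe_le_norm _
  · simpa using abs_dugundjiExtend_sub_le_of_notMem c hD hc f hx (b := 0) fun i _ => by
      simpa using f.norm_coe_le_norm (c i)

theorem dist_dugundjiExtend_le (hD : IsClosed D) (hc : DenseRange c) (f : C(D, ℝ)) (t : D)
    (x : Ω) {ε : ℝ} (h : ∀ s : D, dist (s : Ω) t ≤ 3 * dist x t → dist (f s) (f t) ≤ ε) :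
    dist (dugundjiExtend c f x) (f t) ≤ ε := by
  by_cases hx : x ∈ D
  · rw [dugundjiExtend_of_mem c f hx]
    exact h ⟨x, hx⟩ (le_mul_of_one_le_left dist_nonneg (by norm_num))
  · rw [Real.dist_eq]
    refine abs_dugundjiExtend_sub_le_of_notMem c hD hc f hx fun i hi => ?_
    rw [← Real.dist_eq]
    refine h (c i) ?_
    have : infDist x D ≤ dist x t := infDist_le_dist_of_mem t.2
    calc dist (c i : Ω) t ≤ dist x (c i) + dist x t := dist_triangle_left _ _ _
      _ ≤ 3 * dist x t := by linarith

theorem continuous_tsum_dugundjiWeight_mul (f : C(D, ℝ)) :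
    Continuous fun x => ∑' i, dugundjiWeight c i x * f (c i) :=
  continuous_tsum (fun i => (continuous_dugundjiWeight c i).mul continuous_const)
    (summable_geometric_two.mul_left ‖f‖)
    (norm_dugundjiWeight_mul_le c f)

theorem continuousAt_dugundjiExtend_of_mem (hD : IsClosed D) (hc : DenseRange c) (f : C(D, ℝ))
    (t : D) : ContinuousAt (dugundjiExtend c f) t := by
  refine Metric.continuousAt_iff.2 fun ε hε => ?_
  obtain ⟨δ, hδ, hf⟩ := Metric.continuousAt_iff.1 (f.continuous.continuousAt (x := t))
    (ε / 2) (half_pos hε)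
  refine ⟨δ / 3, by positivity, fun {x} hx => ?_⟩
  rw [dugundjiExtend_of_mem c f t.2]
  refine (dist_dugundjiExtend_le c hD hc f t x fun s hs => (hf ?_).le).trans_lt
    (half_lt_self hε)
  rw [Subtype.dist_eq]
  linarith

theorem continuous_dugundjiExtend (hD : IsClosed D) (hc : DenseRange c) (f : C(D, ℝ)) :
    Continuous (dugundjiExtend c f) := by
  refine continuous_iff_continuousAt.2 fun t => ?_
  by_cases ht : t ∈ D
  · exact continuousAt_dugundjiExtend_of_mem c hD hc f ⟨t, ht⟩
  · refine ((continuous_tsum_dugundjiWeight_mul c f).continuousAt.div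
      (continuous_tsum_dugundjiWeight c).continuousAt
      (tsum_dugundjiWeight_pos c hD hc ht).ne').congr ?_
    filter_upwards [hD.isOpen_compl.mem_nhds ht] with x hx
    exact (dugundjiExtend_of_notMem c f hx).symm

theorem dugundjiExtend_add (f g : C(D, ℝ)) :
    dugundjiExtend c (f + g) = dugundjiExtend c f + dugundjiExtend c g := by
  funext x
  by_cases hx : x ∈ D
  · simp [dugundjiExtend_of_mem c _ hx]
  · rw [Pi.add_apply, dugundjiExtend_of_notMem c _ hx, dugundjiExtend_of_notMem c _ hx,
      dugundjiExtend_of_notMem c _ hx, ← add_div,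
      ← (summable_dugundjiWeight_mul c f x).tsum_add (summable_dugundjiWeight_mul c g x)]
    simp only [ContinuousMap.add_apply, mul_add]

noncomputable def dugundjiExtension [CompactSpace Ω] (hD : IsClosed D) (hc : DenseRange c) :
    C(D, ℝ) →L[ℝ] C(Ω, ℝ) :=
  LinearMap.mkContinuous
    { toFun := fun f => ⟨dugundjiExtend c f, continuous_dugundjiExtend c hD hc f⟩
      map_add' := fun f g => ContinuousMap.ext (congrFun (dugundjiExtend_add c f g))
      map_smul' := fun a f => ContinuousMap.ext (congrFun (dugundjiExtend_smul c a f)) }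
    1 fun f => by
      rw [one_mul]
      exact (ContinuousMap.norm_le _ (norm_nonneg f)).2 fun x =>
        (Real.norm_eq_abs _).trans_le (abs_dugundjiExtend_le c hD hc f x)

theorem norm_dugundjiExtension_le [CompactSpace Ω] (hD : IsClosed D) (hc : DenseRange c) :
    ‖dugundjiExtension c hD hc‖ ≤ 1 :=
  LinearMap.mkContinuous_norm_le _ zero_le_one _

theorem restrict_dugundjiExtension [CompactSpace Ω] (hD : IsClosed D) (hc : DenseRange c)
    (f : C(D, ℝ)) : ContinuousMap.restrictCLM ℝ D (dugundjiExtension c hD hc f) = f :=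
  ContinuousMap.ext fun t => dugundjiExtend_of_mem c f t.2

end Dugundji

theorem exists_extensionCLM_norm_le_one {Ω : Type*} [PseudoMetricSpace Ω] [CompactSpace Ω]
    {D : Set Ω} [CompactSpace D] (hD : IsClosed D) :
    ∃ E : C(D, ℝ) →L[ℝ] C(Ω, ℝ), ‖E‖ ≤ 1 ∧ ∀ f, ContinuousMap.restrictCLM ℝ D (E f) = f := by
  rcases isEmpty_or_nonempty D with hD₀ | hD₀
  · exact ⟨0, by simp, fun f => Subsingleton.elim _ _⟩
  · exact ⟨dugundjiExtension (denseSeq D) hD (denseRange_denseSeq D),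
      norm_dugundjiExtension_le _ hD _, restrict_dugundjiExtension _ hD _⟩

theorem vanishingIdeal_eq_ker_restrictCLM (Ω : Type*) [TopologicalSpace Ω] [CompactSpace Ω]
    (D : Set Ω) [CompactSpace D] :
    vanishingIdeal Ω D =
      (ContinuousMap.restrictCLM ℝ (F := ℝ) D : C(Ω, ℝ) →ₗ[ℝ] C(D, ℝ)).ker := by
  ext f
  exact ⟨fun h => ContinuousMap.ext fun t => h t t.2, fun h t ht => DFunLike.congr_fun h ⟨t, ht⟩⟩

/-- For a compact metrizable space `Ω`, a closed subset `D ⊆ Ω` and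
`J = {f ∈ C(Ω) : f|_D ≡ 0}`, the pair `(C(Ω), J)` has the quotient lifting property. -/
theorem qlp_of_M_ideal_in_continuous_functions_on_compact_metrizable
    (Ω : Type*) [TopologicalSpace Ω] [CompactSpace Ω] [TopologicalSpace.MetrizableSpace Ω]
    (D : Set Ω) (hD : IsClosed D) :
    HasQLP C(Ω, ℝ) (vanishingIdeal Ω D) := by
  let _ : MetricSpace Ω := metrizableSpaceMetric Ω
  have : CompactSpace D := isCompact_iff_compactSpace.1 hD.isCompact
  obtain ⟨E, hE, hRE⟩ := exists_extensionCLM_norm_le_one hD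
  rw [vanishingIdeal_eq_ker_restrictCLM]
  exact .of_rightInverse _ E (ContinuousMap.norm_restrictCLM_le ℝ D) hE hRE
end

section
/- Let n be a positive integer, let C([0,1]^n) be the Banach space of continuous real-valued functions on the cube [0,1]^n with the supremum norm, let D be a closed subset of [0,1]^n, and let J = {f ∈ C([0,1]^n) : f(t) = 0 for all t ∈ D}. Then the metric projection onto J admits a linear selection: there exists a linear map p : C([0,1]^n) → C([0,1]^n) with p(f) ∈ J and ‖f − p(f)‖∞ = dist(f, J) for all f ∈ C([0,1]^n). -/
open Metric Filter Topology

noncomputable section DugundjiAux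

variable {X : Type*} [MetricSpace X]

/-- weight functions -/
def lamD (D : Set X) (c : ℕ → X) (k : ℕ) (x : X) : ℝ :=
  max 0 (2 * infDist x D - dist x (c k))

def wD (D : Set X) (c : ℕ → X) (k : ℕ) (x : X) : ℝ :=
  (1/2 : ℝ) ^ k * lamD D c k x

def SD (D : Set X) (c : ℕ → X) (x : X) : ℝ := ∑' k, wD D c k x

def ND (D : Set X) (c : ℕ → X) (g : C(X, ℝ)) (x : X) : ℝ :=
  ∑' k, wD D c k x * g (c k)

open Classical in
/-- the (pointwise) extension/selection kernel -/
def FD (D : Set X) (c : ℕ → X) (g : C(X, ℝ)) (x : X) : ℝ :=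
  if x ∈ D then g x else ND D c g x / SD D c x

variable (D : Set X) (c : ℕ → X)

lemma lamD_nonneg (k : ℕ) (x : X) : 0 ≤ lamD D c k x := le_max_left _ _

lemma lamD_le (k : ℕ) (x : X) : lamD D c k x ≤ 2 * infDist x D := by
  apply max_le
  · have := infDist_nonneg (s := D) (x := x); linarith
  · have := dist_nonneg (x := x) (y := c k); linarith

lemma wD_nonneg (k : ℕ) (x : X) : 0 ≤ wD D c k x := by
  have := lamD_nonneg D c k x
  have : (0:ℝ) ≤ (1/2:ℝ)^k := by positivity
  unfold wD; positivity

lemma wD_le (k : ℕ) (x : X) : wD D c k x ≤ (1/2:ℝ)^k * (2 * infDist x D) := by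
  unfold wD
  have h1 : (0:ℝ) ≤ (1/2:ℝ)^k := by positivity
  exact mul_le_mul_of_nonneg_left (lamD_le D c k x) h1

lemma summable_wD (x : X) : Summable (fun k => wD D c k x) := by
  refine Summable.of_nonneg_of_le (fun k => wD_nonneg D c k x) (fun k => wD_le D c k x) ?_
  exact (summable_geometric_of_lt_one (r := (1/2:ℝ)) (by norm_num) (by norm_num)).mul_right _

lemma summable_wD_mul (x : X) (h : ℕ → ℝ) (C : ℝ) (hC : ∀ k, |h k| ≤ C) :
    Summable (fun k => wD D c k x * h k) := by
  refine Summable.of_norm ?_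
  refine Summable.of_nonneg_of_le (fun k => norm_nonneg _) (fun k => ?_)
    (((summable_wD D c x).mul_right C))
  rw [Real.norm_eq_abs, abs_mul, abs_of_nonneg (wD_nonneg D c k x)]
  exact mul_le_mul_of_nonneg_left (hC k) (wD_nonneg D c k x)

lemma SD_nonneg (x : X) : 0 ≤ SD D c x := tsum_nonneg (fun k => wD_nonneg D c k x)

lemma continuous_lamD (k : ℕ) : Continuous (lamD D c k) := by
  unfold lamD
  exact continuous_const.max
    ((continuous_const.mul (continuous_infDist_pt D)).sub (continuous_id.dist continuous_const))

lemma continuous_wD (k : ℕ) : Continuous (wD D c k) :=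
  continuous_const.mul (continuous_lamD D c k)

/-- positivity of the denominator off `D` -/
lemma SD_pos [CompactSpace X] (hD : IsClosed D) (hne : D.Nonempty)
    (hcD : ∀ k, c k ∈ D) (hc : ∀ p ∈ D, ∀ ε > 0, ∃ k, dist p (c k) < ε)
    {x : X} (hx : x ∉ D) : 0 < SD D c x := by
  have hr : 0 < infDist x D := (hD.notMem_iff_infDist_pos hne).mp hx
  obtain ⟨p, hp, hxp⟩ : ∃ p ∈ D, dist x p < infDist x D + infDist x D / 2 :=
    (infDist_lt_iff hne).mp (by linarith)
  obtain ⟨k, hk⟩ := hc p hp (infDist x D / 2) (by linarith)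
  have hdx : dist x (c k) < 2 * infDist x D := by
    have := dist_triangle x p (c k)
    linarith
  have hlam : 0 < lamD D c k x := by
    unfold lamD
    rw [lt_max_iff]; right; linarith
  have hw : 0 < wD D c k x := by
    unfold wD; positivity
  have hle : wD D c k x ≤ ∑' j, wD D c j x :=
    Summable.le_tsum (summable_wD D c x) k (fun j _ => wD_nonneg D c j x)
  unfold SD
  linarith

/-- convex-combination bound -/
lemma ND_bound (x : X) (h : ℕ → ℝ) (C : ℝ) (hC0 : 0 ≤ C) (hCb : ∀ k, |h k| ≤ C)
    (ε : ℝ) (hε : 0 ≤ ε) (hb : ∀ k, lamD D c k x ≠ 0 → |h k| ≤ ε) :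
    |∑' k, wD D c k x * h k| ≤ ε * SD D c x := by
  have hs : Summable (fun k => wD D c k x * h k) := summable_wD_mul D c x h C hCb
  have habs : Summable (fun k => ‖wD D c k x * h k‖) := by
    simpa only [Real.norm_eq_abs] using hs.abs
  have h1 : ‖∑' k, wD D c k x * h k‖ ≤ ∑' k, ‖wD D c k x * h k‖ :=
    norm_tsum_le_tsum_norm habs
  simp only [Real.norm_eq_abs] at h1
  calc |∑' k, wD D c k x * h k| ≤ ∑' k, |wD D c k x * h k| := h1
    _ ≤ ∑' k, ε * wD D c k x := by
        refine Summable.tsum_le_tsum (fun k => ?_) hs.abs ((summable_wD D c x).mul_left ε)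
        rw [abs_mul, abs_of_nonneg (wD_nonneg D c k x)]
        by_cases hk : lamD D c k x = 0
        · simp [wD, hk]
        · rw [mul_comm ε]
          exact mul_le_mul_of_nonneg_left (hb k hk) (wD_nonneg D c k x)
    _ = ε * SD D c x := tsum_mul_left

lemma exists_infDist_bound [CompactSpace X] (D : Set X) :
    ∃ B : ℝ, ∀ x : X, infDist x D ≤ B := by
  cases isEmpty_or_nonempty X
  · exact ⟨0, fun x => isEmptyElim x⟩
  · obtain ⟨x₀, -, hx₀⟩ := isCompact_univ.exists_isMaxOn Set.univ_nonempty
      ((continuous_infDist_pt D).continuousOn)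
    exact ⟨infDist x₀ D, fun x => hx₀ (Set.mem_univ x)⟩

lemma continuous_SD [CompactSpace X] : Continuous (SD D c) := by
  obtain ⟨B, hB⟩ := exists_infDist_bound D
  refine continuous_tsum (fun k => continuous_wD D c k)
    ((summable_geometric_of_lt_one (r := (1/2:ℝ)) (by norm_num) (by norm_num)).mul_right (2*B)) (fun k x => ?_)
  rw [Real.norm_eq_abs, abs_of_nonneg (wD_nonneg D c k x)]
  calc wD D c k x ≤ (1/2:ℝ)^k * (2 * infDist x D) := wD_le D c k x
    _ ≤ (1/2:ℝ)^k * (2*B) := by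
        have h1 : (0:ℝ) ≤ (1/2:ℝ)^k := by positivity
        have := hB x
        exact mul_le_mul_of_nonneg_left (by linarith) h1

lemma continuous_ND [CompactSpace X] (g : C(X, ℝ)) : Continuous (ND D c g) := by
  obtain ⟨B, hB⟩ := exists_infDist_bound D
  refine continuous_tsum (fun k => (continuous_wD D c k).mul (g.continuous.comp continuous_const))
    ((summable_geometric_of_lt_one (r := (1/2:ℝ)) (by norm_num) (by norm_num)).mul_right (2*B*‖g‖))
    (fun k x => ?_)
  have h1 : (0:ℝ) ≤ (1/2:ℝ)^k := by positivity
  have hg : |g (c k)| ≤ ‖g‖ := by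
    simpa [Real.norm_eq_abs] using g.norm_coe_le_norm (c k)
  have hg0 : (0:ℝ) ≤ ‖g‖ := norm_nonneg _
  have hw := wD_nonneg D c k x
  have hwle : wD D c k x ≤ (1/2:ℝ)^k * (2 * B) := by
    calc wD D c k x ≤ (1/2:ℝ)^k * (2 * infDist x D) := wD_le D c k x
      _ ≤ (1/2:ℝ)^k * (2*B) := mul_le_mul_of_nonneg_left (by have := hB x; linarith) h1
  rw [Real.norm_eq_abs, abs_mul, abs_of_nonneg hw]
  calc wD D c k x * |g (c k)| ≤ ((1/2:ℝ)^k * (2*B)) * ‖g‖ :=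
        mul_le_mul hwle hg (abs_nonneg _)
          (by have hB0 : (0:ℝ) ≤ B := le_trans infDist_nonneg (hB x); positivity)
    _ = (1/2:ℝ)^k * (2*B*‖g‖) := by ring

/-- Continuity of the extension. -/
lemma continuous_FD [CompactSpace X] (hD : IsClosed D) (hne : D.Nonempty)
    (hcD : ∀ k, c k ∈ D) (hc : ∀ p ∈ D, ∀ ε > 0, ∃ k, dist p (c k) < ε)
    (g : C(X, ℝ)) : Continuous (FD D c g) := by
  rw [continuous_iff_continuousAt]
  intro x
  by_cases hx : x ∈ D
  · -- boundary / interior of D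
    rw [Metric.continuousAt_iff]
    intro ε hε
    obtain ⟨δ, hδ, hgδ⟩ := Metric.continuousAt_iff.mp (g.continuous.continuousAt (x := x)) (ε/2)
      (by linarith)
    refine ⟨δ/4, by linarith, fun {y} hy => ?_⟩
    have hFx : FD D c g x = g x := if_pos hx
    by_cases hy' : y ∈ D
    · have : FD D c g y = g y := if_pos hy'
      rw [this, hFx]
      exact lt_trans (hgδ (lt_trans hy (by linarith))) (by linarith)
    · have hFy : FD D c g y = ND D c g y / SD D c y := if_neg hy'
      have hS : 0 < SD D c y := SD_pos D c hD hne hcD hc hy'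
      -- rewrite N - gx * S as a single tsum
      have hCb : ∀ k, |g (c k) - g x| ≤ ‖g‖ + ‖g‖ := by
        intro k
        have h1 : |g (c k)| ≤ ‖g‖ := by
          simpa [Real.norm_eq_abs] using g.norm_coe_le_norm (c k)
        have h2 : |g x| ≤ ‖g‖ := by
          simpa [Real.norm_eq_abs] using g.norm_coe_le_norm x
        calc |g (c k) - g x| ≤ |g (c k)| + |g x| := abs_sub _ _
          _ ≤ ‖g‖ + ‖g‖ := add_le_add h1 h2
      have hsub : ND D c g y - g x * SD D c y = ∑' k, wD D c k y * (g (c k) - g x) := by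
        have h1 : Summable (fun k => wD D c k y * g (c k)) :=
          summable_wD_mul D c y _ ‖g‖ (fun k => by
            simpa [Real.norm_eq_abs] using g.norm_coe_le_norm (c k))
        have h2 : Summable (fun k => wD D c k y * g x) := (summable_wD D c y).mul_right _
        rw [show (fun k => wD D c k y * (g (c k) - g x)) =
            (fun k => wD D c k y * g (c k) - wD D c k y * g x) from funext (fun k => by ring)]
        rw [Summable.tsum_sub h1 h2, tsum_mul_right]
        unfold ND SD
        ring
      have hkey : |ND D c g y - g x * SD D c y| ≤ (ε/2) * SD D c y := by
        rw [hsub]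
        refine ND_bound D c y _ (‖g‖ + ‖g‖) (by positivity) hCb (ε/2) (by linarith)
          (fun k hk => ?_)
        -- weight nonzero ⇒ c k is close to x
        have hdyk : dist y (c k) < 2 * infDist y D := by
          by_contra hcon
          push_neg at hcon
          apply hk
          unfold lamD
          rw [max_eq_left]
          linarith
        have hinf : infDist y D ≤ dist y x := infDist_le_dist_of_mem hx
        have htri : dist (c k) x ≤ dist (c k) y + dist y x := dist_triangle _ _ _
        have hckx : dist (c k) x < δ := by
          rw [dist_comm (c k) y] at htri
          linarith
        have := hgδ hckx
        rw [Real.dist_eq] at this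
        linarith
      have : |FD D c g y - FD D c g x| ≤ ε/2 := by
        rw [hFy, hFx]
        have h3 : (ND D c g y - g x * SD D c y) / SD D c y
            = ND D c g y / SD D c y - g x := by
          rw [sub_div, mul_div_cancel_right₀ _ (ne_of_gt hS)]
        rw [← h3, abs_div, abs_of_pos hS, div_le_iff₀ hS]
        exact hkey
      rw [Real.dist_eq]
      linarith
  · -- off D: eventually equal to N/S
    have hopen : Dᶜ ∈ 𝓝 x := hD.isOpen_compl.mem_nhds hx
    have hS : 0 < SD D c x := SD_pos D c hD hne hcD hc hx
    have hcont : ContinuousAt (fun y => ND D c g y / SD D c y) x :=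
      ((continuous_ND D c g).continuousAt).div ((continuous_SD D c).continuousAt) (ne_of_gt hS)
    refine hcont.congr ?_
    filter_upwards [hopen] with y hy
    exact (if_neg hy).symm

/-- Pointwise bound on the extension. -/
lemma FD_le [CompactSpace X] (hD : IsClosed D) (hne : D.Nonempty)
    (hcD : ∀ k, c k ∈ D) (hc : ∀ p ∈ D, ∀ ε > 0, ∃ k, dist p (c k) < ε)
    (g : C(X, ℝ)) (ε : ℝ) (hε : 0 ≤ ε) (hg : ∀ t ∈ D, |g t| ≤ ε) (x : X) :
    |FD D c g x| ≤ ε := by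
  by_cases hx : x ∈ D
  · rw [FD, if_pos hx]; exact hg x hx
  · rw [FD, if_neg hx]
    have hS : 0 < SD D c x := SD_pos D c hD hne hcD hc hx
    have hb : |ND D c g x| ≤ ε * SD D c x := by
      refine ND_bound D c x _ ‖g‖ (norm_nonneg _)
        (fun k => by simpa [Real.norm_eq_abs] using g.norm_coe_le_norm (c k)) ε hε
        (fun k _ => hg (c k) (hcD k))
    rw [abs_div, abs_of_pos hS, div_le_iff₀ hS]
    exact hb

lemma ND_add [CompactSpace X] (f g : C(X, ℝ)) (x : X) :
    ND D c (f + g) x = ND D c f x + ND D c g x := by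
  have h1 : Summable (fun k => wD D c k x * f (c k)) :=
    summable_wD_mul D c x _ ‖f‖ (fun k => by
      simpa [Real.norm_eq_abs] using f.norm_coe_le_norm (c k))
  have h2 : Summable (fun k => wD D c k x * g (c k)) :=
    summable_wD_mul D c x _ ‖g‖ (fun k => by
      simpa [Real.norm_eq_abs] using g.norm_coe_le_norm (c k))
  unfold ND
  rw [show (fun k => wD D c k x * (f + g) (c k)) =
      (fun k => wD D c k x * f (c k) + wD D c k x * g (c k)) from
    funext (fun k => by simp [ContinuousMap.add_apply]; ring)]
  exact Summable.tsum_add h1 h2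

lemma ND_smul [CompactSpace X] (r : ℝ) (g : C(X, ℝ)) (x : X) :
    ND D c (r • g) x = r * ND D c g x := by
  unfold ND
  rw [show (fun k => wD D c k x * (r • g) (c k)) =
      (fun k => r * (wD D c k x * g (c k))) from
    funext (fun k => by simp [ContinuousMap.smul_apply]; ring)]
  exact tsum_mul_left

lemma FD_add [CompactSpace X] (f g : C(X, ℝ)) (x : X) :
    FD D c (f + g) x = FD D c f x + FD D c g x := by
  by_cases hx : x ∈ D
  · simp [FD, if_pos hx]
  · simp only [FD, if_neg hx]
    rw [ND_add, add_div]

lemma FD_smul [CompactSpace X] (r : ℝ) (g : C(X, ℝ)) (x : X) :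
    FD D c (r • g) x = r * FD D c g x := by
  by_cases hx : x ∈ D
  · simp [FD, if_pos hx]
  · simp only [FD, if_neg hx]
    rw [ND_smul, mul_div_assoc]

end DugundjiAux

/-- The general linear selection theorem on a compact second-countable metric space. -/
theorem exists_linear_selection {X : Type*} [MetricSpace X] [CompactSpace X]
    [SecondCountableTopology X] (D : Set X) (hD : IsClosed D) :
    ∃ p : C(X, ℝ) →ₗ[ℝ] C(X, ℝ), ∀ f, (∀ t ∈ D, p f t = 0) ∧
      ‖f - p f‖ = Metric.infDist f {g : C(X, ℝ) | ∀ t ∈ D, g t = 0} := by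
  rcases D.eq_empty_or_nonempty with hDe | hne
  · subst hDe
    refine ⟨LinearMap.id, fun f => ⟨fun t ht => absurd ht (Set.notMem_empty t), ?_⟩⟩
    have hf : f ∈ {g : C(X, ℝ) | ∀ t ∈ (∅ : Set X), g t = 0} := fun t ht =>
      absurd ht (Set.notMem_empty t)
    rw [show (LinearMap.id : C(X, ℝ) →ₗ[ℝ] C(X, ℝ)) f = f from rfl, sub_self, norm_zero]
    exact (Metric.infDist_zero_of_mem hf).symm
  · obtain ⟨d₀, hd₀⟩ := hne
    haveI : Nonempty ↥D := ⟨⟨d₀, hd₀⟩⟩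
    obtain ⟨u, hu⟩ := TopologicalSpace.exists_dense_seq ↥D
    set c : ℕ → X := fun k => (u k : X) with hcdef
    have hcD : ∀ k, c k ∈ D := fun k => (u k).2
    have hc : ∀ p ∈ D, ∀ ε > 0, ∃ k, dist p (c k) < ε := by
      intro p hp ε hε
      obtain ⟨k, hk⟩ := hu.exists_dist_lt ⟨p, hp⟩ hε
      refine ⟨k, ?_⟩
      rw [Subtype.dist_eq] at hk
      exact hk
    have hDn : D.Nonempty := ⟨d₀, hd₀⟩
    set q : C(X, ℝ) →ₗ[ℝ] C(X, ℝ) :=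
      { toFun := fun g => ⟨FD D c g, continuous_FD D c hD hDn hcD hc g⟩
        map_add' := fun f g => by
          ext x
          exact FD_add D c f g x
        map_smul' := fun r g => by
          ext x
          exact FD_smul D c r g x } with hqdef
    have hq_apply : ∀ (g : C(X, ℝ)) (x : X), q g x = FD D c g x := fun g x => rfl
    refine ⟨(LinearMap.id : C(X, ℝ) →ₗ[ℝ] C(X, ℝ)) - q, fun f => ⟨?_, ?_⟩⟩
    · intro t ht
      have h0 : ((LinearMap.id : C(X, ℝ) →ₗ[ℝ] C(X, ℝ)) - q) f = f - q f := rfl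
      rw [h0, ContinuousMap.sub_apply, hq_apply, FD, if_pos ht, sub_self]
    · have hpf : ((LinearMap.id : C(X, ℝ) →ₗ[ℝ] C(X, ℝ)) - q) f = f - q f := rfl
      have hsub : f - (f - q f) = q f := sub_sub_cancel f (q f)
      set J : Set C(X, ℝ) := {g : C(X, ℝ) | ∀ t ∈ D, g t = 0} with hJdef
      have hJne : J.Nonempty := ⟨0, fun t _ => rfl⟩
      have hmem : f - q f ∈ J := by
        intro t ht
        rw [ContinuousMap.sub_apply, hq_apply, FD, if_pos ht, sub_self]
      have hc0 : 0 ≤ Metric.infDist f J := Metric.infDist_nonneg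
      have hpt : ∀ t ∈ D, |f t| ≤ Metric.infDist f J := by
        intro t ht
        by_contra hlt
        push_neg at hlt
        obtain ⟨h, hhJ, hdist⟩ := (Metric.infDist_lt_iff hJne).mp hlt
        have h1 : |f t| = |(f - h) t| := by
          rw [ContinuousMap.sub_apply, hhJ t ht, sub_zero]
        have h2 : |(f - h) t| ≤ ‖f - h‖ := by
          simpa [Real.norm_eq_abs] using (f - h).norm_coe_le_norm t
        have h3 : |f t| ≤ dist f h := by
          rw [dist_eq_norm, h1]; exact h2
        exact absurd hdist (not_lt.mpr h3)
      have hub : ‖q f‖ ≤ Metric.infDist f J := by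
        rw [ContinuousMap.norm_le _ hc0]
        intro x
        rw [Real.norm_eq_abs, hq_apply]
        exact FD_le D c hD hDn hcD hc f _ hc0 hpt x
      have hlb : Metric.infDist f J ≤ ‖q f‖ := by
        have := Metric.infDist_le_dist_of_mem (x := f) hmem
        rw [dist_eq_norm, hsub] at this
        exact this
      rw [hpf, hsub]
      exact le_antisymm hub hlb


/-- For the cube `[0,1]^n` (`n ≥ 1`), a closed subset `D` and
`J = {f ∈ C([0,1]^n) : f|_D ≡ 0}`, the metric projection onto `J` admits a linear selection. -/
theorem linear_selection_for_M_ideal_on_cube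
    (n : ℕ) (hn : 0 < n) (D : Set (Fin n → Set.Icc (0 : ℝ) 1)) (hD : IsClosed D) :
    ∃ p : C(Fin n → Set.Icc (0 : ℝ) 1, ℝ) →ₗ[ℝ] C(Fin n → Set.Icc (0 : ℝ) 1, ℝ),
      ∀ f, p f ∈ vanishingIdeal _ D ∧
        ‖f - p f‖ = Metric.infDist f ((vanishingIdeal _ D : Submodule ℝ _) :
          Set C(Fin n → Set.Icc (0 : ℝ) 1, ℝ)) := by
  obtain ⟨p, hp⟩ := exists_linear_selection D hD
  exact ⟨p, fun f => ⟨(hp f).1, (hp f).2⟩⟩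
end
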